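/- arXiv:0912.2394 — 8 statements merged into one kernel-verified Lean document; each statement's English description precedes it below -/
import Mathlib

section
/- Let a : ℕ → ℕ (indexed from 1) satisfy: a(1) = 1, a(2) = 2, and for every n ≥ 2, a(n+1) is the smallest positive integer not among a(1), …, a(n) whose greatest common divisor with a(n) exceeds 1. Then every positive integer occurs in the sequence, i.e., for every m ≥ 1 there exists n ≥ 1 with a(n) = m; consequently a is a bijection from the positive integers onto the positive integers. -/
/-!
Distinct terms force `a n → ∞`. Suppose `p > 0` divides none of `a N, a (N + 1), …`.
For `n ≥ N` and a prime `q ∣ a n`, one of the `N` numbers `p q j` with `1 ≤ j ≤ N` is still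
unused, so `a (n + 1) ≤ p q N`. If the least prime factor of `a n` were at most `p N` infinitely
often, the next term would stay bounded infinitely often. Otherwise the prime `r` shared by `a n`
and `a (n + 1)` gives `a (n + 1) ≤ p r N`, which forces `a (n + 1) = r`: eventually every term is
prime, impossible for consecutive distinct terms with a common factor. So every `m ≥ 2` divides
infinitely many terms, and a missing `m` would be an admissible choice after each of them,
keeping the following term at most `m`.
-/

/-- The EKG sequence property: `a 1 = 1`, `a 2 = 2`, and for `n ≥ 2`,
`a (n+1)` is the smallest positive integer not among `a 1, …, a n`
whose gcd with `a n` exceeds 1. -/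
def IsEKG (a : ℕ → ℕ) : Prop :=
  a 1 = 1 ∧ a 2 = 2 ∧
    ∀ n, 2 ≤ n →
      IsLeast {m : ℕ | 0 < m ∧ (∀ i, 1 ≤ i → i ≤ n → a i ≠ m) ∧
        1 < Nat.gcd m (a n)} (a (n + 1))

open Filter

theorem Nat.one_lt_gcd_of_dvd {d x y : ℕ} (hd : 1 < d) (hx : 0 < x) (hdx : d ∣ x)
    (hdy : d ∣ y) : 1 < Nat.gcd x y :=
  hd.trans_le (Nat.le_of_dvd (Nat.gcd_pos_of_pos_left y hx) (Nat.dvd_gcd hdx hdy))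

theorem Nat.eq_one_of_dvd_of_lt_minFac {t m : ℕ} (hm : m ≠ 0) (ht : t ∣ m)
    (hlt : t < m.minFac) : t = 1 := by
  by_contra h
  have ht0 : t ≠ 0 := by rintro rfl; exact hm (Nat.eq_zero_of_zero_dvd ht)
  have := Nat.minFac_le_of_dvd (by omega) ht
  omega

/-- Pigeonhole: only `a 1, …, a (N - 1)` can equal one of the `N` multiples `m j` of `p`. -/
theorem exists_mul_ne_of_not_dvd {a : ℕ → ℕ} {p m N : ℕ} (hm : 0 < m) (hpm : p ∣ m)
    (hN : 0 < N) (hpa : ∀ i, N ≤ i → ¬ p ∣ a i) :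
    ∃ j ∈ Finset.Icc 1 N, ∀ i, 1 ≤ i → a i ≠ m * j := by
  have hcard :
      ((Finset.Icc 1 (N - 1)).image a).card < ((Finset.Icc 1 N).image (m * ·)).card := by
    rw [Finset.card_image_of_injective _ (mul_right_injective₀ hm.ne')]
    calc ((Finset.Icc 1 (N - 1)).image a).card ≤ (Finset.Icc 1 (N - 1)).card :=
          Finset.card_image_le
      _ < (Finset.Icc 1 N).card := by simp only [Nat.card_Icc]; omega
  obtain ⟨_, hx, hxa⟩ := Finset.exists_mem_notMem_of_card_lt_card hcard
  obtain ⟨j, hj, rfl⟩ := Finset.mem_image.mp hx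
  refine ⟨j, hj, fun i hi heq => ?_⟩
  by_cases hiN : N ≤ i
  · exact hpa i hiN (heq ▸ hpm.mul_right j)
  · exact hxa (Finset.mem_image.mpr ⟨i, Finset.mem_Icc.mpr ⟨hi, by omega⟩, heq⟩)

namespace IsEKG

variable {a : ℕ → ℕ}

theorem ne_of_lt (ha : IsEKG a) {i j : ℕ} (hi : 1 ≤ i) (hij : i < j) : a i ≠ a j := by
  obtain ⟨k, rfl⟩ : ∃ k, j = k + 1 := ⟨j - 1, by omega⟩
  by_cases hk : 2 ≤ k
  · exact (ha.2.2 k hk).1.2.1 i hi (by omega)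
  · obtain ⟨rfl, rfl⟩ : i = 1 ∧ k = 1 := by omega
    simp [ha.1, ha.2.1]

theorem injOn (ha : IsEKG a) : Set.InjOn a {n | 1 ≤ n} := by
  intro i hi j hj hij
  by_contra hne
  rcases Nat.lt_or_gt_of_ne hne with h | h
  · exact ha.ne_of_lt hi h hij
  · exact ha.ne_of_lt hj h hij.symm

theorem pos (ha : IsEKG a) {n : ℕ} (hn : 1 ≤ n) : 0 < a n := by
  obtain ⟨k, rfl⟩ : ∃ k, n = k + 1 := ⟨n - 1, by omega⟩
  rcases Nat.lt_or_ge k 2 with hk | hk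
  · interval_cases k <;> simp [ha.1, ha.2.1]
  · exact (ha.2.2 k hk).1.1

theorem one_lt (ha : IsEKG a) {n : ℕ} (hn : 2 ≤ n) : 1 < a n := by
  have hne : a 1 ≠ a n := ha.ne_of_lt le_rfl hn
  have := ha.pos (n := n) (by omega)
  rw [ha.1] at hne
  omega

theorem one_lt_gcd (ha : IsEKG a) {n : ℕ} (hn : 2 ≤ n) : 1 < Nat.gcd (a (n + 1)) (a n) :=
  (ha.2.2 n hn).1.2.2

theorem succ_le (ha : IsEKG a) {n m : ℕ} (hn : 2 ≤ n) (hm : 0 < m)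
    (hfresh : ∀ i, 1 ≤ i → i ≤ n → a i ≠ m) (hgcd : 1 < Nat.gcd m (a n)) :
    a (n + 1) ≤ m :=
  (ha.2.2 n hn).2 ⟨hm, hfresh, hgcd⟩

theorem tendsto_atTop (ha : IsEKG a) : Tendsto a atTop atTop :=
  (tendsto_add_atTop_iff_nat 1).mp <| Function.Injective.nat_tendsto_atTop fun i j h => by
    simpa using ha.injOn (by simp) (by simp) h

theorem succ_le_mul_of_not_dvd (ha : IsEKG a) {p m N n : ℕ} (hm : 0 < m) (hpm : p ∣ m)
    (hN : 0 < N) (hpa : ∀ i, N ≤ i → ¬ p ∣ a i) (hn : 2 ≤ n)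
    (hgcd : 1 < Nat.gcd m (a n)) :
    a (n + 1) ≤ m * N := by
  obtain ⟨j, hj, hfresh⟩ := exists_mul_ne_of_not_dvd hm hpm hN hpa
  rw [Finset.mem_Icc] at hj
  have hmj : 0 < m * j := Nat.mul_pos hm (by omega)
  calc a (n + 1) ≤ m * j :=
        ha.succ_le hn hmj (fun i hi _ => hfresh i hi)
          (Nat.one_lt_gcd_of_dvd hgcd hmj ((Nat.gcd_dvd_left _ _).mul_right j)
            (Nat.gcd_dvd_right _ _))
    _ ≤ m * N := Nat.mul_le_mul_left m hj.2

section NotDvd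

variable {p N : ℕ}

theorem eventually_lt_minFac_of_not_dvd (ha : IsEKG a) (hp : 0 < p) (hN : 2 ≤ N)
    (hpa : ∀ i, N ≤ i → ¬ p ∣ a i) : ∀ᶠ n in atTop, p * N < (a n).minFac := by
  by_contra hsmall
  rw [not_eventually] at hsmall
  have hlarge : ∀ᶠ n in atTop, N ≤ n ∧ p * (p * N) * N < a (n + 1) :=
    (eventually_ge_atTop N).and
      ((ha.tendsto_atTop.comp (tendsto_add_atTop_nat 1)).eventually_gt_atTop _)
  obtain ⟨n, hq, hNn, hn⟩ := (hsmall.and_eventually hlarge).exists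
  set q := (a n).minFac
  have hqp : q.Prime := Nat.minFac_prime (ha.one_lt (by omega)).ne'
  have hle : a (n + 1) ≤ p * q * N :=
    ha.succ_le_mul_of_not_dvd (Nat.mul_pos hp hqp.pos) (dvd_mul_right p q) (by omega) hpa
      (by omega) (Nat.one_lt_gcd_of_dvd hqp.one_lt (Nat.mul_pos hp hqp.pos) (dvd_mul_left q p)
        (Nat.minFac_dvd _))
  have : p * q * N ≤ p * (p * N) * N := by gcongr; omega
  omega

theorem eventually_prime_of_not_dvd (ha : IsEKG a) (hp : 0 < p) (hN : 2 ≤ N)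
    (hpa : ∀ i, N ≤ i → ¬ p ∣ a i) : ∀ᶠ n in atTop, (a n).Prime := by
  obtain ⟨M, hM⟩ := (ha.eventually_lt_minFac_of_not_dvd hp hN hpa).exists_forall_of_atTop
  refine eventually_atTop.mpr ⟨max M N + 1, fun n hn => ?_⟩
  obtain ⟨k, rfl⟩ : ∃ k, n = k + 1 := ⟨n - 1, by omega⟩
  set r := (Nat.gcd (a (k + 1)) (a k)).minFac
  have hrp : r.Prime := Nat.minFac_prime (ha.one_lt_gcd (by omega)).ne'
  have hr_succ : r ∣ a (k + 1) := (Nat.minFac_dvd _).trans (Nat.gcd_dvd_left _ _)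
  have hr_self : r ∣ a k := (Nat.minFac_dvd _).trans (Nat.gcd_dvd_right _ _)
  have hpr : 0 < p * r := Nat.mul_pos hp hrp.pos
  have hle : a (k + 1) ≤ p * r * N :=
    ha.succ_le_mul_of_not_dvd hpr (dvd_mul_right p r) (by omega) hpa (by omega)
      (Nat.one_lt_gcd_of_dvd hrp.one_lt hpr (dvd_mul_left r p) hr_self)
  obtain ⟨t, ht⟩ := hr_succ
  have htle : t ≤ p * N := by
    refine Nat.le_of_mul_le_mul_left ?_ hrp.pos
    calc r * t = a (k + 1) := ht.symm
      _ ≤ p * r * N := hle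
      _ = r * (p * N) := by ring
  have ht1 : t = 1 :=
    Nat.eq_one_of_dvd_of_lt_minFac (ha.pos (by omega)).ne' ⟨r, by rw [ht, mul_comm]⟩
      (htle.trans_lt (hM (k + 1) (by omega)))
  rwa [ht, ht1, mul_one]

end NotDvd

theorem not_eventually_prime (ha : IsEKG a) : ¬ ∀ᶠ n in atTop, (a n).Prime := by
  intro h
  obtain ⟨N, hN⟩ := h.exists_forall_of_atTop
  set n := max N 2
  have hcop : ¬ Nat.Coprime (a (n + 1)) (a n) := by
    have := ha.one_lt_gcd (n := n) (by omega)
    rw [Nat.Coprime]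
    omega
  rw [Nat.coprime_primes (hN _ (by omega)) (hN _ (by omega)), not_not] at hcop
  exact ha.ne_of_lt (by omega) (Nat.lt_succ_self n) hcop.symm

theorem frequently_dvd (ha : IsEKG a) {p : ℕ} (hp : 0 < p) : ∃ᶠ n in atTop, p ∣ a n := by
  intro hnot
  obtain ⟨N, hN⟩ := hnot.exists_forall_of_atTop
  have hpa : ∀ i, max N 2 ≤ i → ¬ p ∣ a i := fun i hi => hN i (le_of_max_le_left hi)
  exact ha.not_eventually_prime (ha.eventually_prime_of_not_dvd hp (le_max_right N 2) hpa)

theorem exists_eq_of_frequently_dvd (ha : IsEKG a) {d m : ℕ} (hd : 1 < d) (hdm : d ∣ m)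
    (hm : 0 < m) (hfreq : ∃ᶠ n in atTop, d ∣ a n) : ∃ n, 1 ≤ n ∧ a n = m := by
  by_contra hmissing
  push Not at hmissing
  have hlarge : ∀ᶠ n in atTop, 2 ≤ n ∧ m < a (n + 1) :=
    (eventually_ge_atTop 2).and
      ((ha.tendsto_atTop.comp (tendsto_add_atTop_nat 1)).eventually_gt_atTop m)
  obtain ⟨n, hdn, hn, hlt⟩ := (hfreq.and_eventually hlarge).exists
  have := ha.succ_le hn hm (fun i hi _ => hmissing i hi) (Nat.one_lt_gcd_of_dvd hd hm hdm hdn)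
  omega

end IsEKG

theorem ekg_surjective (a : ℕ → ℕ) (ha : IsEKG a) :
    (∀ m : ℕ, 1 ≤ m → ∃ n : ℕ, 1 ≤ n ∧ a n = m) ∧
      Set.BijOn a {n : ℕ | 1 ≤ n} {m : ℕ | 1 ≤ m} := by
  have hsurj : ∀ m : ℕ, 1 ≤ m → ∃ n : ℕ, 1 ≤ n ∧ a n = m := by
    intro m hm
    rcases hm.eq_or_lt with rfl | hm
    · exact ⟨1, le_rfl, ha.1⟩
    · exact ha.exists_eq_of_frequently_dvd hm dvd_rfl (by omega) (ha.frequently_dvd (by omega))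
  exact ⟨hsurj, fun n hn => ha.pos hn, ha.injOn, fun m hm => hsurj m hm⟩
end

section
/- Let b : ℕ → ℕ (indexed from 1) satisfy: b(1) = 1, and for every n ≥ 1, b(n+1) is the largest k such that the finite word b(1), b(2), …, b(n) can be written as a concatenation X Y^k with X a (possibly empty) word and Y a nonempty word. Then b(220) = 4, and b(n) ≤ 3 for all n with 1 ≤ n < 220; that is, the first occurrence of the value 4 in Gijswijt's sequence is at term 220. -/
def hasPow (w : List ℕ) (m : ℕ) : Bool :=
  (List.range (w.length / m)).any fun i =>
    w.drop (w.length - m * (i+1)) == List.flatten (List.replicate m (w.drop (w.length - (i+1))))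

lemma flat_len (m : ℕ) (Y : List ℕ) : ((List.replicate m Y).flatten).length = m * Y.length := by
  induction m with
  | zero => simp
  | succ k ih => simp [List.replicate_succ, ih, Nat.succ_mul]; ring

lemma hasPow_iff (w : List ℕ) (m : ℕ) (hm : 1 ≤ m) :
    hasPow w m = true ↔ ∃ X Y : List ℕ, Y ≠ [] ∧ w = X ++ (List.replicate m Y).flatten := by
  constructor
  · intro h
    rw [hasPow, List.any_eq_true] at h
    obtain ⟨i, hi, hbeq⟩ := h
    rw [List.mem_range] at hi
    set d := i + 1 with hd
    have hdm : m * d ≤ w.length := by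
      have : d ≤ w.length / m := hi
      calc m * d = d * m := Nat.mul_comm _ _
        _ ≤ w.length := (Nat.le_div_iff_mul_le hm).1 this
    have hdn : d ≤ w.length := le_trans (Nat.le_mul_of_pos_left d hm) hdm
    have heq : w.drop (w.length - m * d) =
        List.flatten (List.replicate m (w.drop (w.length - d))) := by
      simpa using hbeq
    refine ⟨w.take (w.length - m * d), w.drop (w.length - d), ?_, ?_⟩
    · have : (w.drop (w.length - d)).length = d := by
        rw [List.length_drop]; omega
      intro hnil; rw [hnil] at this; simp at this
    · rw [← heq, List.take_append_drop]
  · rintro ⟨X, Y, hY, hw⟩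
    rw [hasPow, List.any_eq_true]
    set d := Y.length with hd
    have hd1 : 1 ≤ d := List.length_pos_iff.2 hY
    have hlen : w.length = X.length + m * d := by
      rw [hw, List.length_append, flat_len]
    refine ⟨d - 1, ?_, ?_⟩
    · rw [List.mem_range]
      have : d ≤ w.length / m := by
        rw [Nat.le_div_iff_mul_le hm]
        calc d * m = m * d := Nat.mul_comm _ _
          _ ≤ w.length := by omega
      omega
    · have hdd : d - 1 + 1 = d := by omega
      rw [hdd, beq_iff_eq]
      have h1 : w.drop (w.length - m * d) = (List.replicate m Y).flatten := by
        have : w.length - m * d = X.length := by omega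
        rw [this, hw, List.drop_left]
      have h2 : w.drop (w.length - d) = Y := by
        have hsplit : List.replicate m Y = List.replicate (m - 1) Y ++ [Y] := by
          have : m = (m - 1) + 1 := by omega
          rw [this, List.replicate_add]; simp
        have : w.length - d = X.length + (m - 1) * d := by
          have : m * d = (m - 1) * d + d := by
            have : m = (m-1)+1 := by omega
            nth_rewrite 1 [this]; ring
          omega
        rw [this, hw, ← List.drop_drop, List.drop_left]
        rw [hsplit, List.flatten_append]
        have : ((List.replicate (m-1) Y).flatten).length = (m-1) * d := flat_len _ _
        rw [← this, List.drop_left]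
        simp
      rw [h1, h2]

lemma step (w : List ℕ) (c : ℕ) (hc : 1 ≤ c) (h1 : hasPow w c = true)
    (h2 : hasPow w (c+1) = false) :
    IsGreatest {k : ℕ | ∃ X Y : List ℕ, Y ≠ [] ∧ w = X ++ (List.replicate k Y).flatten} c := by
  constructor
  · exact (hasPow_iff w c hc).1 h1
  · rintro k ⟨X, Y, hY, hw⟩
    by_contra h
    push_neg at h
    have : hasPow w (c+1) = true := by
      rw [hasPow_iff w (c+1) (by omega)]
      refine ⟨X ++ (List.replicate (k - (c+1)) Y).flatten, Y, hY, ?_⟩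
      rw [hw, List.append_assoc, ← List.flatten_append, ← List.replicate_add]
      congr 3
      omega
    rw [this] at h2; exact absurd h2 (by simp)

/-- The word `b 1, b 2, …, b n` as a list. -/
def gword (b : ℕ → ℕ) (n : ℕ) : List ℕ :=
  (List.range n).map fun i => b (i + 1)

/-- Gijswijt's sequence property: `b 1 = 1` and for `n ≥ 1`, `b (n+1)` is the
largest `k` such that `b 1, …, b n` can be written as `X ++ Y^k` with `Y` nonempty. -/
def IsGijswijt (b : ℕ → ℕ) : Prop :=
  b 1 = 1 ∧
    ∀ n, 1 ≤ n →
      IsGreatest {k : ℕ | ∃ X Y : List ℕ, Y ≠ [] ∧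
        gword b n = X ++ (List.replicate k Y).flatten} (b (n + 1))
def gvals : List ℕ := [1, 1, 2, 1, 1, 2, 2, 2, 3, 1, 1, 2, 1, 1, 2, 2, 2, 3, 2, 1, 1, 2, 1, 1, 2, 2, 2, 3, 1, 1, 2, 1, 1, 2, 2, 2, 3, 2, 2, 2, 3, 2, 2, 2, 3, 3, 2, 1, 1, 2, 1, 1, 2, 2, 2, 3, 1, 1, 2, 1, 1, 2, 2, 2, 3, 2, 1, 1, 2, 1, 1, 2, 2, 2, 3, 1, 1, 2, 1, 1, 2, 2, 2, 3, 2, 2, 2, 3, 2, 2, 2, 3, 3, 2, 2, 2, 3, 2, 1, 1, 2, 1, 1, 2, 2, 2, 3, 1, 1, 2, 1, 1, 2, 2, 2, 3, 2, 1, 1, 2, 1, 1, 2, 2, 2, 3, 1, 1, 2, 1, 1, 2, 2, 2, 3, 2, 2, 2, 3, 2, 2, 2, 3, 3, 2, 1, 1, 2, 1, 1, 2, 2, 2, 3, 1, 1, 2, 1, 1, 2, 2, 2, 3, 2, 1, 1, 2, 1, 1, 2, 2, 2, 3, 1, 1, 2, 1, 1, 2, 2, 2, 3, 2, 2, 2,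 3, 2, 2, 2, 3, 3, 2, 2, 2, 3, 2, 2, 2, 3, 2, 2, 2, 3, 3, 2, 2, 2, 3, 2, 2, 2, 3, 2, 2, 2, 3, 3, 3, 3, 4]

set_option maxRecDepth 1000000 in
set_option maxHeartbeats 1000000000 in
lemma bulk_1 : ∀ n, 1 ≤ n → n < 21 →
    1 ≤ gvals.getD n 0 ∧ hasPow (gvals.take n) (gvals.getD n 0) = true ∧
      hasPow (gvals.take n) (gvals.getD n 0 + 1) = false := by
  intro n h1 h2
  interval_cases n <;> exact ⟨by decide, by decide, by decide⟩

set_option maxRecDepth 1000000 in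
set_option maxHeartbeats 1000000000 in
lemma bulk_21 : ∀ n, 21 ≤ n → n < 41 →
    1 ≤ gvals.getD n 0 ∧ hasPow (gvals.take n) (gvals.getD n 0) = true ∧
      hasPow (gvals.take n) (gvals.getD n 0 + 1) = false := by
  intro n h1 h2
  interval_cases n <;> exact ⟨by decide, by decide, by decide⟩

set_option maxRecDepth 1000000 in
set_option maxHeartbeats 1000000000 in
lemma bulk_41 : ∀ n, 41 ≤ n → n < 61 →
    1 ≤ gvals.getD n 0 ∧ hasPow (gvals.take n) (gvals.getD n 0) = true ∧
      hasPow (gvals.take n) (gvals.getD n 0 + 1) = false := by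
  intro n h1 h2
  interval_cases n <;> exact ⟨by decide, by decide, by decide⟩

set_option maxRecDepth 1000000 in
set_option maxHeartbeats 1000000000 in
lemma bulk_61 : ∀ n, 61 ≤ n → n < 81 →
    1 ≤ gvals.getD n 0 ∧ hasPow (gvals.take n) (gvals.getD n 0) = true ∧
      hasPow (gvals.take n) (gvals.getD n 0 + 1) = false := by
  intro n h1 h2
  interval_cases n <;> exact ⟨by decide, by decide, by decide⟩

set_option maxRecDepth 1000000 in
set_option maxHeartbeats 1000000000 in
lemma bulk_81 : ∀ n, 81 ≤ n → n < 101 →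
    1 ≤ gvals.getD n 0 ∧ hasPow (gvals.take n) (gvals.getD n 0) = true ∧
      hasPow (gvals.take n) (gvals.getD n 0 + 1) = false := by
  intro n h1 h2
  interval_cases n <;> exact ⟨by decide, by decide, by decide⟩

set_option maxRecDepth 1000000 in
set_option maxHeartbeats 1000000000 in
lemma bulk_101 : ∀ n, 101 ≤ n → n < 121 →
    1 ≤ gvals.getD n 0 ∧ hasPow (gvals.take n) (gvals.getD n 0) = true ∧
      hasPow (gvals.take n) (gvals.getD n 0 + 1) = false := by
  intro n h1 h2
  interval_cases n <;> exact ⟨by decide, by decide, by decide⟩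

set_option maxRecDepth 1000000 in
set_option maxHeartbeats 1000000000 in
lemma bulk_121 : ∀ n, 121 ≤ n → n < 141 →
    1 ≤ gvals.getD n 0 ∧ hasPow (gvals.take n) (gvals.getD n 0) = true ∧
      hasPow (gvals.take n) (gvals.getD n 0 + 1) = false := by
  intro n h1 h2
  interval_cases n <;> exact ⟨by decide, by decide, by decide⟩

set_option maxRecDepth 1000000 in
set_option maxHeartbeats 1000000000 in
lemma bulk_141 : ∀ n, 141 ≤ n → n < 161 →
    1 ≤ gvals.getD n 0 ∧ hasPow (gvals.take n) (gvals.getD n 0) = true ∧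
      hasPow (gvals.take n) (gvals.getD n 0 + 1) = false := by
  intro n h1 h2
  interval_cases n <;> exact ⟨by decide, by decide, by decide⟩

set_option maxRecDepth 1000000 in
set_option maxHeartbeats 1000000000 in
lemma bulk_161 : ∀ n, 161 ≤ n → n < 181 →
    1 ≤ gvals.getD n 0 ∧ hasPow (gvals.take n) (gvals.getD n 0) = true ∧
      hasPow (gvals.take n) (gvals.getD n 0 + 1) = false := by
  intro n h1 h2
  interval_cases n <;> exact ⟨by decide, by decide, by decide⟩

set_option maxRecDepth 1000000 in
set_option maxHeartbeats 1000000000 in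
lemma bulk_181 : ∀ n, 181 ≤ n → n < 201 →
    1 ≤ gvals.getD n 0 ∧ hasPow (gvals.take n) (gvals.getD n 0) = true ∧
      hasPow (gvals.take n) (gvals.getD n 0 + 1) = false := by
  intro n h1 h2
  interval_cases n <;> exact ⟨by decide, by decide, by decide⟩

set_option maxRecDepth 1000000 in
set_option maxHeartbeats 1000000000 in
lemma bulk_201 : ∀ n, 201 ≤ n → n < 220 →
    1 ≤ gvals.getD n 0 ∧ hasPow (gvals.take n) (gvals.getD n 0) = true ∧
      hasPow (gvals.take n) (gvals.getD n 0 + 1) = false := by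
  intro n h1 h2
  interval_cases n <;> exact ⟨by decide, by decide, by decide⟩

lemma bulk : ∀ n, 1 ≤ n → n < 220 →
    1 ≤ gvals.getD n 0 ∧ hasPow (gvals.take n) (gvals.getD n 0) = true ∧
      hasPow (gvals.take n) (gvals.getD n 0 + 1) = false := by
  intro n h1 h2
  rcases Nat.lt_or_ge n 21 with ha0 | ha0
  · exact bulk_1 n (by omega) ha0
  rcases Nat.lt_or_ge n 41 with ha1 | ha1
  · exact bulk_21 n (by omega) ha1
  rcases Nat.lt_or_ge n 61 with ha2 | ha2
  · exact bulk_41 n (by omega) ha2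
  rcases Nat.lt_or_ge n 81 with ha3 | ha3
  · exact bulk_61 n (by omega) ha3
  rcases Nat.lt_or_ge n 101 with ha4 | ha4
  · exact bulk_81 n (by omega) ha4
  rcases Nat.lt_or_ge n 121 with ha5 | ha5
  · exact bulk_101 n (by omega) ha5
  rcases Nat.lt_or_ge n 141 with ha6 | ha6
  · exact bulk_121 n (by omega) ha6
  rcases Nat.lt_or_ge n 161 with ha7 | ha7
  · exact bulk_141 n (by omega) ha7
  rcases Nat.lt_or_ge n 181 with ha8 | ha8
  · exact bulk_161 n (by omega) ha8
  rcases Nat.lt_or_ge n 201 with ha9 | ha9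
  · exact bulk_181 n (by omega) ha9
  exact bulk_201 n (by omega) (by omega)


set_option maxRecDepth 100000 in
lemma gvals_le : ∀ m < 219, gvals.getD m 0 ≤ 3 := by decide

set_option maxRecDepth 100000 in
theorem gijswijt_first_four (b : ℕ → ℕ) (hb : IsGijswijt b) :
    b 220 = 4 ∧ ∀ n : ℕ, 1 ≤ n → n < 220 → b n ≤ 3 := by
  obtain ⟨hb1, hb2⟩ := hb
  have key : ∀ n, n ≤ 220 → ∀ i, 1 ≤ i → i ≤ n → b i = gvals.getD (i-1) 0 := by
    intro n
    induction n with
    | zero => intro _ i h1 h2; omega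
    | succ n ih =>
      intro hn i h1 h2
      rcases Nat.lt_or_ge i (n+1) with h | h
      · exact ih (by omega) i h1 (by omega)
      have hi : i = n + 1 := by omega
      subst hi
      rcases Nat.eq_zero_or_pos n with rfl | hn1
      · show b 1 = gvals.getD 0 0; rw [hb1]; rfl
      have hglen : gvals.length = 220 := by decide
      have hw : gword b n = gvals.take n := by
        apply List.ext_getElem
        · simp [gword, hglen]; omega
        · intro j hj1 hj2
          have hj : j < n := by simpa [gword] using hj1
          have hbj : b (j+1) = gvals.getD j 0 := by
            simpa using ih (by omega) (j+1) (by omega) (by omega)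
          have hget : gvals.getD j 0 = gvals[j]'(by omega) := List.getD_eq_getElem _ _ _
          simp only [gword, List.getElem_map, List.getElem_range, List.getElem_take, hbj, hget]
      have hgr := hb2 n hn1
      rw [hw] at hgr
      obtain ⟨hc1, hmem, hub⟩ := bulk n hn1 (by omega)
      have hgr2 := step (gvals.take n) (gvals.getD n 0) hc1 hmem hub
      simpa using hgr.unique hgr2
  constructor
  · have h := key 220 le_rfl 220 (by omega) le_rfl
    rw [h]
    decide
  · intro n h1 h2
    rw [key 220 le_rfl n h1 (by omega)]
    exact gvals_le (n-1) (by omega)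
end

section
/- Let c : ℕ → ℕ (indexed from 1) be strictly increasing with c(1) = 1, c(2) = 4, and for every n ≥ 2: c(n+1) = c(n) + 1 if the condition “n+1 occurs among c(1), …, c(n)” holds exactly when c(n) is even, and c(n+1) = c(n) + 2 otherwise. Then every odd integer m ≥ 7 occurs as a term of the sequence: for every odd m ≥ 7 there exists n with c(n) = m. -/
/-!
The recurrence makes `n + 1` a value exactly when `c (n + 1)` is odd, and since `c n ≥ n + 2`
from `n = 2` on, this reads: `n` is a value iff `c n` is odd. Steps are `+1` or `+2`, so of any
two consecutive integers `≥ 3` one is a value. Hence if `c n` is even then `n` is not a value,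
`n + 1` is one (with a smaller index), and the next step is `+1`. So from an odd value the
sequence reaches the next odd number either in one `+2` step or via an even value and a `+1`
step; starting from `c 4 = 7` it meets every odd number `≥ 7`.
-/

/-- The sequence A079000: strictly increasing, `c 1 = 1`, `c 2 = 4`, and for `n ≥ 2`,
`c (n+1) = c n + 1` when ((n+1) occurs among `c 1, …, c n`) ↔ (`c n` is even),
and `c (n+1) = c n + 2` otherwise. -/
def IsA079000 (c : ℕ → ℕ) : Prop :=
  (∀ ⦃m n : ℕ⦄, 1 ≤ m → m < n → c m < c n) ∧ c 1 = 1 ∧ c 2 = 4 ∧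
    ∀ n, 2 ≤ n →
      (((∃ i, 1 ≤ i ∧ i ≤ n ∧ c i = n + 1) ↔ Even (c n)) → c (n + 1) = c n + 1) ∧
      (¬ ((∃ i, 1 ≤ i ∧ i ≤ n ∧ c i = n + 1) ↔ Even (c n)) → c (n + 1) = c n + 2)

namespace IsA079000

variable {c : ℕ → ℕ}

theorem add_two_le_apply (hc : IsA079000 c) {n : ℕ} (hn : 2 ≤ n) : n + 2 ≤ c n := by
  induction n, hn using Nat.le_induction with
  | base => rw [hc.2.2.1]
  | succ n hn ih =>
    have := hc.1 (show 1 ≤ n by omega) (show n < n + 1 by omega)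
    omega

theorem lt_of_apply_eq (hc : IsA079000 c) {i m : ℕ} (hi : 1 ≤ i) (hm : 2 ≤ m)
    (him : c i = m) : i < m := by
  rcases Nat.lt_or_ge i 2 with hi2 | hi2
  · obtain rfl : i = 1 := by omega
    have := hc.2.1
    omega
  · have := hc.add_two_le_apply hi2
    omega

theorem apply_succ_eq_add_one_or_add_two (hc : IsA079000 c) {n : ℕ} (hn : 2 ≤ n) :
    c (n + 1) = c n + 1 ∨ c (n + 1) = c n + 2 := by
  by_cases h : (∃ i, 1 ≤ i ∧ i ≤ n ∧ c i = n + 1) ↔ Even (c n)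
  · exact .inl ((hc.2.2.2 n hn).1 h)
  · exact .inr ((hc.2.2.2 n hn).2 h)

theorem exists_apply_eq_succ_iff_odd (hc : IsA079000 c) {n : ℕ} (hn : 2 ≤ n) :
    (∃ i, 1 ≤ i ∧ i ≤ n ∧ c i = n + 1) ↔ Odd (c (n + 1)) := by
  by_cases h : (∃ i, 1 ≤ i ∧ i ≤ n ∧ c i = n + 1) ↔ Even (c n)
  · rw [(hc.2.2.2 n hn).1 h, Nat.odd_add_one, Nat.not_odd_iff_even]
    exact h
  · rw [(hc.2.2.2 n hn).2 h, Nat.odd_add_one, Nat.odd_add_one, not_not, ← Nat.not_even_iff_odd]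
    exact iff_not_comm.mpr (not_iff.mp h).symm

theorem exists_apply_eq_iff_odd (hc : IsA079000 c) {n : ℕ} (hn : 3 ≤ n) :
    (∃ i, 1 ≤ i ∧ c i = n) ↔ Odd (c n) := by
  obtain ⟨k, rfl⟩ : ∃ k, n = k + 1 := ⟨n - 1, by omega⟩
  rw [← hc.exists_apply_eq_succ_iff_odd (by omega)]
  constructor
  · rintro ⟨i, hi, hci⟩
    exact ⟨i, hi, by have := hc.lt_of_apply_eq hi (by omega) hci; omega, hci⟩
  · rintro ⟨i, hi, -, hci⟩
    exact ⟨i, hi, hci⟩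

theorem exists_apply_eq_or_eq_succ (hc : IsA079000 c) {n : ℕ} (hn : 3 ≤ n) :
    ∃ j, 2 ≤ j ∧ (c j = n ∨ c j = n + 1) := by
  induction n, hn using Nat.le_induction with
  | base => exact ⟨2, le_rfl, .inr hc.2.2.1⟩
  | succ n hn ih =>
    obtain ⟨j, hj, hcj | hcj⟩ := ih
    · rcases hc.apply_succ_eq_add_one_or_add_two hj with hs | hs
      · exact ⟨j + 1, by omega, .inl (by omega)⟩
      · exact ⟨j + 1, by omega, .inr (by omega)⟩
    · exact ⟨j, hj, .inl hcj⟩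

theorem apply_succ_of_even (hc : IsA079000 c) {n : ℕ} (hn : 3 ≤ n) (heven : Even (c n)) :
    c (n + 1) = c n + 1 := by
  have hn_not_value : ¬ ∃ i, 1 ≤ i ∧ c i = n := by
    rw [hc.exists_apply_eq_iff_odd hn, Nat.not_odd_iff_even]
    exact heven
  obtain ⟨j, hj, hcj⟩ := hc.exists_apply_eq_or_eq_succ hn
  have hcj : c j = n + 1 := hcj.resolve_left fun h => hn_not_value ⟨j, by omega, h⟩
  have hjn : j ≤ n := by
    have := hc.lt_of_apply_eq (by omega) (by omega) hcj
    omega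
  exact (hc.2.2.2 n (by omega)).1 (iff_of_true ⟨j, by omega, hjn, hcj⟩ heven)

theorem apply_three (hc : IsA079000 c) : c 3 = 6 := by
  have h2 := hc.2.2.1
  have h3_not_value : ¬ ∃ i, 1 ≤ i ∧ i ≤ 2 ∧ c i = 2 + 1 := by
    rintro ⟨i, hi1, hi2, hci⟩
    interval_cases i <;> simp_all [hc.2.1]
  have := (hc.2.2.2 2 le_rfl).2 fun h => h3_not_value (h.mpr (by rw [h2]; decide))
  simpa [h2] using this

theorem apply_four (hc : IsA079000 c) : c 4 = 7 := by
  simpa [hc.apply_three] using hc.apply_succ_of_even le_rfl (by rw [hc.apply_three]; decide)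

theorem exists_apply_eq_add_two_of_odd (hc : IsA079000 c) {k : ℕ} (hk : 2 ≤ k)
    (hodd : Odd (c k)) :
    ∃ j, 2 ≤ j ∧ c j = c k + 2 := by
  rcases hc.apply_succ_eq_add_one_or_add_two hk with hs | hs
  · have heven : Even (c (k + 1)) := by
      rw [hs]
      exact hodd.add_one
    refine ⟨k + 2, by omega, ?_⟩
    rw [hc.apply_succ_of_even (by omega) heven, hs]
  · exact ⟨k + 1, by omega, hs⟩

end IsA079000

theorem a079000_odd_values (c : ℕ → ℕ) (hc : IsA079000 c) :
    ∀ m : ℕ, Odd m → 7 ≤ m → ∃ n : ℕ, 1 ≤ n ∧ c n = m := by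
  have odd_values : ∀ t, ∃ n, 2 ≤ n ∧ c n = 2 * t + 7 := by
    intro t
    induction t with
    | zero => exact ⟨4, by omega, hc.apply_four⟩
    | succ t ih =>
      obtain ⟨k, hk, hck⟩ := ih
      obtain ⟨j, hj, hcj⟩ :=
        hc.exists_apply_eq_add_two_of_odd hk (by rw [hck]; exact ⟨t + 3, by ring⟩)
      exact ⟨j, hj, by rw [hcj, hck]; ring⟩
  rintro m ⟨s, rfl⟩ h7
  obtain ⟨n, hn, hcn⟩ := odd_values (s - 3)
  exact ⟨n, by omega, by omega⟩
end

section
/- Let c : ℕ → ℕ (indexed from 1) be strictly increasing with c(1) = 1, c(2) = 4, and for every n ≥ 2: c(n+1) = c(n) + 1 if the condition “n+1 occurs among c(1), …, c(n)” holds exactly when c(n) is even, and c(n+1) = c(n) + 2 otherwise. Then for every integer k ≥ 0 and every integer j with −3·2^k ≤ j < 3·2^k, one has c(9·2^k − 3 + j) = 12·2^k − 3 + (3/2)·j + (1/2)·|j|. -/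
def NextOccurs (c : ℕ → ℕ) (n : ℕ) : Prop := ∃ i, 1 ≤ i ∧ i ≤ n ∧ c i = n + 1

def SlopeOneBlock (c : ℕ → ℕ) (K : ℕ) : Prop :=
  ∀ n, 6 * K ≤ n + 3 → n + 3 ≤ 9 * K → c n = n + 3 * K

def SlopeTwoBlock (c : ℕ → ℕ) (K : ℕ) : Prop :=
  ∀ n, 9 * K ≤ n + 3 → n + 4 ≤ 12 * K → c n + 6 * K = 2 * n + 3

namespace IsA079000

variable {c : ℕ → ℕ} {n : ℕ}

theorem succ_of_nextOccurs_of_even (hc : IsA079000 c) (hn : 2 ≤ n) (h : NextOccurs c n)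
    (he : Even (c n)) : c (n + 1) = c n + 1 :=
  (hc.2.2.2 n hn).1 (iff_of_true h he)

theorem succ_of_nextOccurs_of_odd (hc : IsA079000 c) (hn : 2 ≤ n) (h : NextOccurs c n)
    (ho : Odd (c n)) : c (n + 1) = c n + 2 :=
  (hc.2.2.2 n hn).2 fun hiff => Nat.not_even_iff_odd.2 ho (hiff.1 h)

theorem succ_of_not_nextOccurs_of_odd (hc : IsA079000 c) (hn : 2 ≤ n) (h : ¬NextOccurs c n)
    (ho : Odd (c n)) : c (n + 1) = c n + 1 :=
  (hc.2.2.2 n hn).1 (iff_of_false h (Nat.not_even_iff_odd.2 ho))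

theorem succ_of_not_nextOccurs_of_even (hc : IsA079000 c) (hn : 2 ≤ n) (h : ¬NextOccurs c n)
    (he : Even (c n)) : c (n + 1) = c n + 2 :=
  (hc.2.2.2 n hn).2 fun hiff => h (hiff.2 he)

theorem apply_le_apply (hc : IsA079000 c) {m : ℕ} (hm : 1 ≤ m) (hmn : m ≤ n) : c m ≤ c n :=
  (Nat.eq_or_lt_of_le hmn).elim (fun h => h ▸ le_rfl) fun h => (hc.1 hm h).le

theorem not_nextOccurs_of_lt_of_lt (hc : IsA079000 c) {i : ℕ} (hi : 1 ≤ i)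
    (hlow : c i < n + 1) (hhigh : n + 1 < c (i + 1)) : ¬NextOccurs c n := by
  rintro ⟨j, hj, -, hcj⟩
  rcases Nat.lt_or_ge i j with hij | hji
  · have := hc.apply_le_apply (by omega) (show i + 1 ≤ j by omega)
    omega
  · have := hc.apply_le_apply hj hji
    omega

theorem slopeOneBlock_one (hc : IsA079000 c) : SlopeOneBlock c 1 := by
  have h1 : c 1 = 1 := hc.2.1
  have h2 : c 2 = 4 := hc.2.2.1
  have h3 : c 3 = 6 := by
    have hno : ¬NextOccurs c 2 := hc.not_nextOccurs_of_lt_of_lt (i := 1) le_rfl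
      (by norm_num [h1]) (by norm_num [h2])
    rw [hc.succ_of_not_nextOccurs_of_even le_rfl hno (by rw [h2]; decide), h2]
  have h4 : c 4 = 7 := by
    rw [hc.succ_of_nextOccurs_of_even (by norm_num) ⟨2, by norm_num, by norm_num, h2⟩
      (by rw [h3]; decide), h3]
  have h5 : c 5 = 8 := by
    have hno : ¬NextOccurs c 4 := hc.not_nextOccurs_of_lt_of_lt (i := 2) (by norm_num)
      (by norm_num [h2]) (by norm_num [h3])
    rw [hc.succ_of_not_nextOccurs_of_odd (by norm_num) hno (by rw [h4]; decide), h4]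
  have h6 : c 6 = 9 := by
    rw [hc.succ_of_nextOccurs_of_even (by norm_num) ⟨3, by norm_num, by norm_num, h3⟩
      (by rw [h5]; decide), h5]
  intro n hl hu
  obtain ⟨hl, hu⟩ : 3 ≤ n ∧ n ≤ 6 := by omega
  interval_cases n <;> assumption

theorem slopeTwoBlock_of_slopeOneBlock (hc : IsA079000 c) {K : ℕ}
    (hone : SlopeOneBlock c K) : SlopeTwoBlock c K := by
  intro n hl hu
  induction n, (show 9 * K - 3 ≤ n by omega) using Nat.le_induction with
  | base => have := hone (9 * K - 3) (by omega) (by omega); omega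
  | succ n hn ih =>
    have hcn := ih (by omega) (by omega)
    have hocc : NextOccurs c n :=
      ⟨n + 1 - 3 * K, by omega, by omega, by rw [hone _ (by omega) (by omega)]; omega⟩
    have := hc.succ_of_nextOccurs_of_odd (by omega) hocc (Nat.odd_iff.2 (by omega))
    omega

theorem nextOccurs_of_slopeTwoBlock {K : ℕ} (htwo : SlopeTwoBlock c K)
    (hl : 12 * K ≤ n + 4) (hu : n + 6 ≤ 18 * K) (heven : n % 2 = 0) : NextOccurs c n :=
  ⟨(n + 6 * K - 2) / 2, by omega, by omega,
    by have := htwo ((n + 6 * K - 2) / 2) (by omega) (by omega); omega⟩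

theorem not_nextOccurs_of_slopeTwoBlock (hc : IsA079000 c) {K : ℕ}
    (htwo : SlopeTwoBlock c K) (hnext : c (12 * K - 3) = 18 * K - 3)
    (hl : 12 * K ≤ n + 3) (hu : n + 5 ≤ 18 * K) (hodd : n % 2 = 1) : ¬NextOccurs c n := by
  obtain ⟨i, hi⟩ : ∃ i, 2 * i + 3 = n + 6 * K := ⟨(n + 6 * K - 3) / 2, by omega⟩
  have hci : c i + 6 * K = 2 * i + 3 := htwo i (by omega) (by omega)
  have hci' : c (i + 1) = n + 2 := by
    rcases Nat.lt_or_ge (i + 4) (12 * K) with hlt | hge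
    · have := htwo (i + 1) (by omega) (by omega); omega
    · rw [show i + 1 = 12 * K - 3 by omega, hnext]; omega
  exact hc.not_nextOccurs_of_lt_of_lt (i := i) (by omega) (by omega) (by omega)

theorem slopeOneBlock_two_mul (hc : IsA079000 c) {K : ℕ}
    (htwo : SlopeTwoBlock c K) : SlopeOneBlock c (2 * K) := by
  intro n hl hu
  have hfirst : c (12 * K - 3) = 18 * K - 3 := by
    have hprev := htwo (12 * K - 4) (by omega) (by omega)
    have hocc : NextOccurs c (12 * K - 4) :=
      ⟨9 * K - 3, by omega, by omega, by have := htwo (9 * K - 3) (by omega) (by omega); omega⟩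
    have := hc.succ_of_nextOccurs_of_odd (by omega) hocc (Nat.odd_iff.2 (by omega))
    rw [show 12 * K - 4 + 1 = 12 * K - 3 by omega] at this
    omega
  induction n, (show 12 * K - 3 ≤ n by omega) using Nat.le_induction with
  | base => omega
  | succ n hn ih =>
    have hcn := ih (by omega) (by omega)
    rcases Nat.mod_two_eq_zero_or_one n with heven | hodd
    · have hocc : NextOccurs c n := by
        rcases Nat.lt_or_ge (n + 4) (18 * K) with hlt | hge
        · exact nextOccurs_of_slopeTwoBlock htwo (by omega) (by omega) heven
        · exact ⟨12 * K - 3, by omega, by omega, by omega⟩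
      have := hc.succ_of_nextOccurs_of_even (by omega) hocc (Nat.even_iff.2 (by omega))
      omega
    · have hno := hc.not_nextOccurs_of_slopeTwoBlock htwo hfirst (by omega) (by omega) hodd
      have := hc.succ_of_not_nextOccurs_of_odd (by omega) hno (Nat.odd_iff.2 (by omega))
      omega

theorem slopeOneBlock_two_pow (hc : IsA079000 c) (k : ℕ) : SlopeOneBlock c (2 ^ k) := by
  induction k with
  | zero => exact hc.slopeOneBlock_one
  | succ k ih =>
    rw [pow_succ, mul_comm]
    exact hc.slopeOneBlock_two_mul (hc.slopeTwoBlock_of_slopeOneBlock ih)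

end IsA079000

theorem a079000_formula (c : ℕ → ℕ) (hc : IsA079000 c) :
    ∀ (k : ℕ) (j : ℤ), -3 * 2 ^ k ≤ j → j < 3 * 2 ^ k →
      2 * (c (9 * 2 ^ k - 3 + j).toNat : ℤ) = 2 * (12 * 2 ^ k - 3) + 3 * j + |j| := by
  intro k j hjl hju
  have hone := hc.slopeOneBlock_two_pow k
  have htwo := hc.slopeTwoBlock_of_slopeOneBlock hone
  have hcast : ((2 ^ k : ℕ) : ℤ) = 2 ^ k := by push_cast; rfl
  rw [← hcast] at hjl hju ⊢
  generalize 2 ^ k = K at hone htwo hjl hju ⊢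
  rcases le_or_gt 0 j with hj | hj
  · have := htwo (9 * (K : ℤ) - 3 + j).toNat (by omega) (by omega)
    rw [abs_of_nonneg hj]
    omega
  · have := hone (9 * (K : ℤ) - 3 + j).toNat (by omega) (by omega)
    rw [abs_of_neg hj]
    omega
end

section
/- Let f : ℚ → ℚ be the approximate squaring map f(x) = x·⌈x⌉, where ⌈x⌉ is the least integer ≥ x. Let l ≥ 1 be an integer and let m be the exponent of the highest power of 2 dividing l (i.e., m is the 2-adic valuation of l). Starting from x₀ = (2l+1)/2, the (m+1)-st iterate f^[m+1](x₀) is an integer, while f^[j](x₀) is not an integer for any 0 ≤ j ≤ m. In other words, iteration of approximate squaring starting from (2l+1)/2 first reaches an integer after exactly m+1 steps. -/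
/-- The approximate squaring map `x ↦ x ⌈x⌉` on the rationals. -/
def approxSq (x : ℚ) : ℚ := x * (⌈x⌉ : ℚ)

/-!
For an integer `k`, approximate squaring sends `k + 1/2` to `(2k + 1)(k + 1) / 2`. If `k` is odd this
is an integer; if `k = 2t` it is again a half-integer `k' + 1/2` with `k' = t (4t + 3)`, and since
`4t + 3` is odd, `v₂(k') = v₂(t) = v₂(k) - 1`. Induction on `v₂(k)` then gives the theorem.
-/

lemma ceil_half_odd (k : ℤ) : ⌈((2 * k + 1) / 2 : ℚ)⌉ = k + 1 := by
  rw [Int.ceil_eq_iff]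
  push_cast
  constructor <;> linarith

lemma not_exists_intCast_eq_half_odd (k : ℤ) : ¬ ∃ z : ℤ, ((2 * k + 1) / 2 : ℚ) = z := by
  rintro ⟨z, hz⟩
  have : 2 * k + 1 = 2 * z := by
    rw [div_eq_iff two_ne_zero] at hz
    exact_mod_cast hz.trans (mul_comm _ _)
  omega

lemma approxSq_half_odd (k : ℤ) : approxSq ((2 * k + 1) / 2) = (2 * k + 1) * (k + 1) / 2 := by
  rw [approxSq, ceil_half_odd]
  push_cast
  ring

lemma exists_intCast_eq_approxSq_half_odd {k : ℤ} (hk : Odd k) :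
    ∃ z : ℤ, approxSq ((2 * k + 1) / 2) = z := by
  obtain ⟨s, rfl⟩ := hk
  exact ⟨(4 * s + 3) * (s + 1), by rw [approxSq_half_odd]; push_cast; ring⟩

lemma approxSq_half_odd_two_mul (t : ℤ) :
    approxSq ((2 * (2 * t : ℤ) + 1) / 2) = (2 * (t * (4 * t + 3) : ℤ) + 1) / 2 := by
  rw [approxSq_half_odd]
  push_cast
  ring

lemma padicValNat_two_mul_four_mul_add_three (t : ℕ) :
    padicValNat 2 (t * (4 * t + 3)) = padicValNat 2 t := by
  rcases eq_or_ne t 0 with rfl | ht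
  · simp
  rw [padicValNat.mul ht (by omega), padicValNat.eq_zero_of_not_dvd (n := 4 * t + 3) (by omega), add_zero]

theorem approxSq_iterate_half_odd (m : ℕ) : ∀ k : ℕ, k ≠ 0 → padicValNat 2 k = m →
    (∃ z : ℤ, approxSq^[m + 1] ((2 * k + 1) / 2) = z) ∧
      ∀ j ≤ m, ¬ ∃ z : ℤ, approxSq^[j] ((2 * k + 1) / 2) = z := by
  induction m with
  | zero =>
    intro k hk hv
    have hodd : Odd (k : ℤ) := by
      rw [Int.odd_coe_nat, Nat.odd_iff]
      rcases padicValNat.eq_zero_iff.mp hv with h | h | h <;> omega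
    refine ⟨by simpa using exists_intCast_eq_approxSq_half_odd hodd, fun j hj => ?_⟩
    obtain rfl : j = 0 := by omega
    simpa using not_exists_intCast_eq_half_odd k
  | succ m ih =>
    intro k hk hv
    obtain ⟨t, rfl⟩ : 2 ∣ k := dvd_of_one_le_padicValNat (by omega)
    have ht : t ≠ 0 := by omega
    have hvt : padicValNat 2 t = m := by
      rw [padicValNat.mul two_ne_zero ht, padicValNat_self] at hv
      omega
    have hstep : approxSq ((2 * ((2 * t : ℕ) : ℚ) + 1) / 2)
        = (2 * ((t * (4 * t + 3) : ℕ) : ℚ) + 1) / 2 := by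
      have := approxSq_half_odd_two_mul t
      push_cast at this ⊢
      exact this
    obtain ⟨hint, hnot⟩ := ih (t * (4 * t + 3)) (by positivity)
      (by rw [padicValNat_two_mul_four_mul_add_three, hvt])
    refine ⟨by rwa [Function.iterate_succ_apply, hstep], ?_⟩
    rintro (_ | j) hj
    · simpa using not_exists_intCast_eq_half_odd (2 * t)
    · rw [Function.iterate_succ_apply, hstep]
      exact hnot j (by omega)

theorem approxSq_half_integer_steps (l : ℕ) (hl : 1 ≤ l) :
    let m := padicValNat 2 l
    let x₀ : ℚ := (2 * l + 1) / 2
    (∃ z : ℤ, approxSq^[m + 1] x₀ = (z : ℚ)) ∧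
      ∀ j : ℕ, j ≤ m → ¬ ∃ z : ℤ, approxSq^[j] x₀ = (z : ℚ) :=
  approxSq_iterate_half_odd _ l (by omega) rfl
end

section
/- For an integer n ≥ 0, let r₄(n) denote the number of quadruples (i, j, k, l) of integers with i² + j² + k² + l² = n (order and signs counted as distinct). Let T be the formal power series with integer coefficients whose coefficient of x^n is r₄(n) when n is even and 0 when n is odd (this is the theta series of the D₄ lattice, T = 1 + 24x² + 24x⁴ + 96x⁶ + 24x⁸ + 144x¹⁰ + ⋯). Then there exists a formal power series g with integer coefficients such that g⁴ = T. -/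
/-- `r₄ n` is the number of ordered quadruples of integers whose squares sum to `n`. -/
noncomputable def r4 (n : ℕ) : ℕ :=
  Nat.card {q : ℤ × ℤ × ℤ × ℤ //
    q.1 ^ 2 + q.2.1 ^ 2 + q.2.2.1 ^ 2 + q.2.2.2 ^ 2 = (n : ℤ)}

/-- The theta series of the D₄ lattice: coefficient of xⁿ is r₄(n) for even n, 0 for odd n. -/
noncomputable def thetaD4 : PowerSeries ℤ :=
  PowerSeries.mk fun n => if Even n then (r4 n : ℤ) else 0

/-!
Every even `n > 0` has `24 ∣ r₄(n)`. View the representations of `n` as the Lipschitz quaternions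
`z ∈ ℍ[ℤ]` of norm `n`. The eight units `±1, ±i, ±j, ±k` act freely on them by left multiplication,
so `8 ∣ r₄(n)`. When `n` is even, left multiplication by the Hurwitz unit `ω = (-1 + i + j + k)/2`
keeps `z` integral, and it is a fixed-point-free permutation of order `3`, so `3 ∣ r₄(n)`.
Hence `θ = 1 + 24w` with `X ∣ w`, and every `1 + 8w` with `X ∣ w` is a fourth power in `R⟦X⟧`:
this is the statement that the binomial series `(1 + 8x)^{1/4}` has integral coefficients, and here
the root is built as the `X`-adic limit of a contracting iteration.
-/

open PowerSeries Quaternion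

section FourthRoot

variable {R : Type*} [CommRing R]

theorem PowerSeries.C_dvd_of_forall_dvd_coeff {c : R} {f : R⟦X⟧} (h : ∀ n, c ∣ coeff n f) :
    C c ∣ f :=
  ⟨mk fun n => (h n).choose, by ext n; rw [coeff_C_mul, coeff_mk, ← (h n).choose_spec]⟩

theorem PowerSeries.exists_isFixedPt_of_X_pow_dvd {Φ : R⟦X⟧ → R⟦X⟧}
    (hΦ : ∀ n p q, X ^ n ∣ p - q → X ^ (n + 1) ∣ Φ p - Φ q) : ∃ f, Function.IsFixedPt Φ f := by
  set s : ℕ → R⟦X⟧ := fun k => Φ^[k] 0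
  have hs_succ_apply : ∀ k, s (k + 1) = Φ (s k) := fun k => Function.iterate_succ_apply' Φ k 0
  have hs_succ : ∀ k, X ^ k ∣ s (k + 1) - s k := by
    intro k
    induction k with
    | zero => simp
    | succ k ih =>
      have := hΦ k _ _ ih
      rwa [← hs_succ_apply, ← hs_succ_apply] at this
  have hs : ∀ k m, k ≤ m → X ^ k ∣ s m - s k := by
    intro k m hkm
    induction m, hkm using Nat.le_induction with
    | base => simp
    | succ m hkm ih => simpa using dvd_add ((pow_dvd_pow X hkm).trans (hs_succ m)) ih
  set f : R⟦X⟧ := mk fun k => coeff k (s (k + 1))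
  have hf : ∀ k, X ^ k ∣ f - s k := fun k => X_pow_dvd_iff.2 fun j hj => by
    have := X_pow_dvd_iff.1 (hs (j + 1) k hj) j (lt_add_one j)
    rw [map_sub, sub_eq_zero] at this ⊢
    rw [this]
    exact coeff_mk _ _
  refine ⟨f, ext fun k => ?_⟩
  have hk : X ^ (k + 1) ∣ Φ f - f := by
    simpa [hs_succ_apply] using dvd_sub (hΦ k _ _ (hf k)) (hf (k + 1))
  simpa [sub_eq_zero] using X_pow_dvd_iff.1 hk k (lt_add_one k)

theorem PowerSeries.exists_pow_four_eq_one_add_eight_mul {w : R⟦X⟧} (hw : constantCoeff w = 0) :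
    ∃ g : R⟦X⟧, g ^ 4 = 1 + 8 * w := by
  -- `(1 + 2wf)⁴ = 1 + 8w(f + 3wf² + 4w²f³ + 2w³f⁴)`, and `f ↦ 1 - 3wf² - 4w²f³ - 2w³f⁴`
  -- is an `X`-adic contraction because `X ∣ w`.
  obtain ⟨f, hf⟩ := exists_isFixedPt_of_X_pow_dvd
    (Φ := fun p => 1 - 3 * w * p ^ 2 - 4 * w ^ 2 * p ^ 3 - 2 * w ^ 3 * p ^ 4) fun n p q hpq => by
      have hdiff : (1 - 3 * w * p ^ 2 - 4 * w ^ 2 * p ^ 3 - 2 * w ^ 3 * p ^ 4) -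
          (1 - 3 * w * q ^ 2 - 4 * w ^ 2 * q ^ 3 - 2 * w ^ 3 * q ^ 4) = w * (p - q) *
          -(3 * (p + q) + 4 * w * (p ^ 2 + p * q + q ^ 2) +
            2 * w ^ 2 * (p ^ 3 + p ^ 2 * q + p * q ^ 2 + q ^ 3)) := by ring
      rw [hdiff, pow_succ']
      exact (mul_dvd_mul (X_dvd_iff.2 hw) hpq).mul_right _
  exact ⟨1 + 2 * w * f, by linear_combination (-8 * w) * hf.eq⟩

end FourthRoot

theorem MulAction.card_dvd_card_of_stabilizer_eq_bot {G X : Type*} [Group G] [MulAction G X]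
    (h : ∀ x : X, stabilizer G x = ⊥) : Nat.card G ∣ Nat.card X :=
  Dvd.intro_left _ (by rw [Nat.card_congr (selfEquivOrbitsQuotientProd h), Nat.card_prod])

namespace Quaternion

theorem normSq_coe_unit (u : ℍ[ℤ]ˣ) : normSq (u : ℍ[ℤ]) = 1 := by
  rcases Int.isUnit_iff.1 (u.isUnit.map normSq) with h | h
  · exact h
  · linarith [normSq_nonneg (a := (u : ℍ[ℤ]))]

theorem isUnit_iff_normSq_eq_one {z : ℍ[ℤ]} : IsUnit z ↔ normSq z = 1 := by
  refine ⟨fun h => normSq_coe_unit h.unit, fun h => ⟨⟨z, star z, ?_, ?_⟩, rfl⟩⟩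
  · rw [self_mul_star, h, coe_one]
  · rw [star_mul_self, h, coe_one]

def lipschitzSphere (n : ℕ) : SubMulAction ℍ[ℤ]ˣ ℍ[ℤ] where
  carrier := {z | normSq z = n}
  smul_mem' u z (hz : normSq z = n) := by
    rw [Set.mem_ofPred_eq, Units.smul_def, smul_eq_mul, map_mul, normSq_coe_unit, one_mul, hz]

theorem mem_lipschitzSphere {n : ℕ} {z : ℍ[ℤ]} : z ∈ lipschitzSphere n ↔ normSq z = n := Iff.rfl

theorem ne_zero_of_mem_lipschitzSphere {n : ℕ} (hn : n ≠ 0) {z : ℍ[ℤ]}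
    (hz : z ∈ lipschitzSphere n) : z ≠ 0 := by
  rintro rfl
  exact hn (by exact_mod_cast (mem_lipschitzSphere.1 hz).symm.trans (map_zero normSq))

end Quaternion

def sumFourSqEquivLipschitzSphere (n : ℕ) :
    {q : ℤ × ℤ × ℤ × ℤ // q.1 ^ 2 + q.2.1 ^ 2 + q.2.2.1 ^ 2 + q.2.2.2 ^ 2 = (n : ℤ)} ≃
      lipschitzSphere n :=
  (Quaternion.equivProd ℤ).symm.subtypeEquiv fun q => by
    rw [mem_lipschitzSphere, normSq_def']; rfl

theorem r4_eq_card_lipschitzSphere (n : ℕ) : r4 n = Nat.card (lipschitzSphere n) :=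
  Nat.card_congr (sumFourSqEquivLipschitzSphere n)

noncomputable def sumFourSqFinset (n : ℕ) : Finset (ℤ × ℤ × ℤ × ℤ) :=
  (Finset.Icc (-n : ℤ) n ×ˢ Finset.Icc (-n : ℤ) n ×ˢ Finset.Icc (-n : ℤ) n ×ˢ
    Finset.Icc (-n : ℤ) n).filter fun q => q.1 ^ 2 + q.2.1 ^ 2 + q.2.2.1 ^ 2 + q.2.2.2 ^ 2 = n

theorem coe_sumFourSqFinset (n : ℕ) :
    (sumFourSqFinset n : Set (ℤ × ℤ × ℤ × ℤ)) =
      {q | q.1 ^ 2 + q.2.1 ^ 2 + q.2.2.1 ^ 2 + q.2.2.2 ^ 2 = (n : ℤ)} := by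
  ext ⟨a, b, c, d⟩
  simp only [sumFourSqFinset, Finset.coe_filter, Finset.mem_product, Finset.mem_Icc]
  refine and_iff_right_of_imp fun (h : a ^ 2 + b ^ 2 + c ^ 2 + d ^ 2 = n) => ?_
  have hsq : ∀ x : ℤ, x ^ 2 ≤ n → -n ≤ x ∧ x ≤ n := fun x hx => by
    rw [← abs_le, ← Int.natCast_natAbs]; exact (Int.natAbs_le_self_sq x).trans hx
  refine ⟨hsq a ?_, hsq b ?_, hsq c ?_, hsq d ?_⟩ <;>
    linarith [sq_nonneg a, sq_nonneg b, sq_nonneg c, sq_nonneg d]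

theorem r4_eq_card_sumFourSqFinset (n : ℕ) : r4 n = (sumFourSqFinset n).card := by
  rw [← Nat.card_eq_finsetCard, ← Finset.coe_sort_coe, coe_sumFourSqFinset]
  rfl

instance (n : ℕ) : Finite (lipschitzSphere n) :=
  have : Finite {q : ℤ × ℤ × ℤ × ℤ // q.1 ^ 2 + q.2.1 ^ 2 + q.2.2.1 ^ 2 + q.2.2.2 ^ 2 = (n : ℤ)} :=
    by rw [← Set.coe_ofPred, ← coe_sumFourSqFinset]; infer_instance
  .of_equiv _ (sumFourSqEquivLipschitzSphere n)

theorem r4_zero : r4 0 = 1 := by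
  rw [r4_eq_card_sumFourSqFinset]; decide

theorem r4_one : r4 1 = 8 := by
  rw [r4_eq_card_sumFourSqFinset]; decide

theorem Quaternion.card_units_int : Nat.card ℍ[ℤ]ˣ = 8 := by
  rw [← r4_one, r4_eq_card_lipschitzSphere]
  refine Nat.card_congr (.ofBijective (fun u => ⟨u, ?_⟩) ⟨fun u v h => ?_, fun z => ?_⟩)
  · exact mem_lipschitzSphere.2 (by exact_mod_cast normSq_coe_unit u)
  · exact Units.ext (congrArg Subtype.val h)
  · obtain ⟨u, hu⟩ := isUnit_iff_normSq_eq_one.2 (by exact_mod_cast mem_lipschitzSphere.1 z.2)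
    exact ⟨u, Subtype.ext hu⟩

theorem stabilizer_lipschitzSphere_eq_bot {n : ℕ} (hn : n ≠ 0) (z : lipschitzSphere n) :
    MulAction.stabilizer ℍ[ℤ]ˣ z = ⊥ := by
  ext u
  rw [MulAction.mem_stabilizer_iff, Subgroup.mem_bot, ← Units.val_eq_one, Subtype.ext_iff,
    SubMulAction.val_smul, Units.smul_def, smul_eq_mul,
    mul_eq_right₀ (ne_zero_of_mem_lipschitzSphere hn z.2)]

theorem eight_dvd_r4 {n : ℕ} (hn : n ≠ 0) : 8 ∣ r4 n := by
  rw [r4_eq_card_lipschitzSphere, ← card_units_int]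
  exact MulAction.card_dvd_card_of_stabilizer_eq_bot (stabilizer_lipschitzSphere_eq_bot hn)

namespace Quaternion

/-- `2ω`, where `ω = (-1 + i + j + k) / 2` is a primitive cube root of unity among the Hurwitz
quaternions. -/
def twoOmega : ℍ[ℤ] := (equivProd ℤ).symm (-1, 1, 1, 1)

theorem twoOmega_pow_three : twoOmega ^ 3 = 8 := by
  ext <;> simp [twoOmega, pow_succ] <;> rfl

theorem normSq_twoOmega : normSq twoOmega = 4 := by
  simp [twoOmega, normSq_def']

theorem twoOmega_ne_two : twoOmega ≠ 2 :=
  ne_of_apply_ne QuaternionAlgebra.re (by decide)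

theorem two_dvd_twoOmega_mul {z : ℍ[ℤ]} (hz : Even (normSq z)) : 2 ∣ twoOmega * z := by
  obtain ⟨t, ht⟩ : Even (z.re + z.imI + z.imJ + z.imK) := by
    simp only [normSq_def', Int.even_add, Int.even_pow] at hz ⊢
    tauto
  refine ⟨(equivProd ℤ).symm (-t, t - z.imI - z.imJ, t - z.imJ - z.imK, t - z.imI - z.imK), ?_⟩
  rw [two_mul]
  ext <;> simp [twoOmega] <;> linarith

theorem normSq_eq_of_twoOmega_mul_eq_two_mul {z w : ℍ[ℤ]} (h : twoOmega * z = 2 * w) :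
    normSq w = normSq z := by
  have := congrArg normSq h
  rw [map_mul, map_mul, normSq_twoOmega, show normSq (2 : ℍ[ℤ]) = 4 from rfl] at this
  linarith

theorem even_normSq_of_mem_lipschitzSphere {n : ℕ} (hn : Even n) {z : ℍ[ℤ]}
    (hz : z ∈ lipschitzSphere n) : Even (normSq z) :=
  mem_lipschitzSphere.1 hz ▸ (Int.even_coe_nat n).2 hn

/-- Left multiplication by `ω`; it maps `ℍ[ℤ]` to itself on quaternions of even norm. -/
noncomputable def omegaMul {n : ℕ} (hn : Even n) (z : lipschitzSphere n) : lipschitzSphere n :=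
  have hz := two_dvd_twoOmega_mul (even_normSq_of_mem_lipschitzSphere hn z.2)
  ⟨hz.choose, mem_lipschitzSphere.2 <|
    (normSq_eq_of_twoOmega_mul_eq_two_mul hz.choose_spec).trans z.2⟩

theorem two_mul_omegaMul {n : ℕ} (hn : Even n) (z : lipschitzSphere n) :
    2 * (omegaMul hn z : ℍ[ℤ]) = twoOmega * z :=
  (two_dvd_twoOmega_mul (even_normSq_of_mem_lipschitzSphere hn z.2)).choose_spec.symm

theorem omegaMul_omegaMul_omegaMul {n : ℕ} (hn : Even n) (z : lipschitzSphere n) :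
    omegaMul hn (omegaMul hn (omegaMul hn z)) = z := by
  have h₁ := two_mul_omegaMul hn z
  have h₂ := two_mul_omegaMul hn (omegaMul hn z)
  have h₃ := two_mul_omegaMul hn (omegaMul hn (omegaMul hn z))
  refine Subtype.ext (mul_left_cancel₀ (ne_of_apply_ne QuaternionAlgebra.re (by decide) :
    (8 : ℍ[ℤ]) ≠ 0) ?_)
  calc (8 : ℍ[ℤ]) * (omegaMul hn (omegaMul hn (omegaMul hn z)) : ℍ[ℤ])
      = 4 * (2 * omegaMul hn (omegaMul hn (omegaMul hn z))) := by noncomm_ring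
    _ = 2 * twoOmega * (2 * omegaMul hn (omegaMul hn z)) := by rw [h₃]; noncomm_ring
    _ = twoOmega ^ 2 * (2 * omegaMul hn z) := by rw [h₂]; noncomm_ring
    _ = twoOmega ^ 3 * z := by rw [h₁]; noncomm_ring
    _ = 8 * z := by rw [twoOmega_pow_three]

theorem omegaMul_ne_self {n : ℕ} (hn : Even n) (hn₀ : n ≠ 0) (z : lipschitzSphere n) :
    omegaMul hn z ≠ z := fun h => by
  have := two_mul_omegaMul hn z
  rw [h, ← sub_eq_zero, ← sub_mul, mul_eq_zero, sub_eq_zero] at this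
  exact this.elim (Ne.symm twoOmega_ne_two) (ne_zero_of_mem_lipschitzSphere hn₀ z.2)

end Quaternion

theorem three_dvd_r4 {n : ℕ} (hn : Even n) (hn₀ : n ≠ 0) : 3 ∣ r4 n := by
  classical
  have := Fintype.ofFinite (lipschitzSphere n)
  have : IsEmpty (omegaMul hn).fixedPoints := ⟨fun z => omegaMul_ne_self hn hn₀ z z.2⟩
  have hmod := Equiv.Perm.card_fixedPoints_modEq (f := omegaMul hn) (p := 3) (n := 1)
    (funext (omegaMul_omegaMul_omegaMul hn))
  simp only [Fintype.card_eq_zero, Nat.modEq_zero_iff_dvd] at hmod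
  rwa [r4_eq_card_lipschitzSphere, Nat.card_eq_fintype_card]

theorem twentyFour_dvd_r4 {n : ℕ} (hn : Even n) (hn₀ : n ≠ 0) : 24 ∣ r4 n :=
  Nat.Coprime.mul_dvd_of_dvd_of_dvd (by norm_num) (eight_dvd_r4 hn₀) (three_dvd_r4 hn hn₀)

theorem twentyFour_dvd_coeff_thetaD4_sub_one (n : ℕ) : (24 : ℤ) ∣ coeff n (thetaD4 - 1) := by
  rcases eq_or_ne n 0 with rfl | hn₀
  · simp [thetaD4, r4_zero]
  · rw [map_sub, coeff_one, if_neg hn₀, sub_zero, thetaD4, coeff_mk]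
    split_ifs with hn
    · exact_mod_cast twentyFour_dvd_r4 hn hn₀
    · exact dvd_zero _

theorem thetaD4_is_fourth_power :
    ∃ g : PowerSeries ℤ, g ^ 4 = thetaD4 := by
  obtain ⟨w, hw⟩ := C_dvd_of_forall_dvd_coeff twentyFour_dvd_coeff_thetaD4_sub_one
  rw [map_ofNat, sub_eq_iff_eq_add'] at hw
  have hw₀ : constantCoeff w = 0 := by
    simpa [thetaD4, r4_zero, map_ofNat constantCoeff 24] using congrArg constantCoeff hw
  obtain ⟨g, hg⟩ := exists_pow_four_eq_one_add_eight_mul (w := 3 * w) (by simp [hw₀])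
  exact ⟨g, by rw [hg, hw]; ring⟩
end

section
/- Let g : ℕ → ℕ (indexed from 1) be Golomb's sequence: the unique nondecreasing sequence of positive integers with g(1) = 1, g(2) = 2, such that for every n ≥ 1, g(n) equals the number of indices m ≥ 1 with g(m) = n. Let φ = (1 + √5)/2 be the golden ratio. Then g(n) is asymptotic to φ^{2−φ}·n^{φ−1}, i.e., the ratio g(n) / (φ^{2−φ}·n^{φ−1}) tends to 1 as n → ∞. -/
/-!
Write `G n = g 1 + ⋯ + g n`. The self-describing property says exactly that
`g m ≤ n ↔ m ≤ G n`, so `g` is the inverse of `G`. If `g j` is eventually within a factor `t`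
of `c j ^ φ⁻¹`, then `G k` is, up to lower-order terms, within a factor `t` of `c k ^ φ / φ`,
and inverting puts `g m` eventually within any factor larger than `t ^ φ⁻¹` of
`(φ m / c) ^ φ⁻¹ = c m ^ φ⁻¹`. A crude induction gives the factor `8`, and since
`t ↦ t ^ φ⁻¹` pushes every `t > 1` towards `1`, every factor `u > 1` is eventually attained.
-/

/-- Golomb's sequence property: nondecreasing positive-integer sequence with
`g 1 = 1`, `g 2 = 2`, such that each value `n ≥ 1` occurs exactly `g n` times
among the terms `g m` for `m ≥ 1`. -/
def IsGolomb (g : ℕ → ℕ) : Prop :=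
  g 1 = 1 ∧ g 2 = 2 ∧ (∀ n, 1 ≤ n → 1 ≤ g n) ∧
    (∀ ⦃m n : ℕ⦄, 1 ≤ m → m ≤ n → g m ≤ g n) ∧
    ∀ n, 1 ≤ n → Nat.card {m : ℕ // 1 ≤ m ∧ g m = n} = g n

open Filter Finset Real goldenRatio

section SumRpow
variable {p : ℝ}

lemma sum_range_add_one_rpow_le (hp : 0 ≤ p) (k : ℕ) :
    ∑ i ∈ range k, ((i : ℝ) + 1) ^ p ≤ ((k : ℝ) + 1) ^ (p + 1) / (p + 1) := by
  have hmono : MonotoneOn (fun x : ℝ => x ^ p) (Set.Icc 1 (1 + k)) :=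
    (monotoneOn_rpow_Ici_of_exponent_nonneg hp).mono fun x hx => by
      simp only [Set.mem_Ici]; linarith [hx.1]
  calc ∑ i ∈ range k, ((i : ℝ) + 1) ^ p = ∑ i ∈ range k, (1 + (i : ℝ)) ^ p := by
        simp only [add_comm]
    _ ≤ ∫ x in (1 : ℝ)..1 + k, x ^ p := hmono.sum_le_integral
    _ = (((k : ℝ) + 1) ^ (p + 1) - 1) / (p + 1) := by
        rw [integral_rpow (Or.inl (by linarith)), one_rpow, add_comm 1 (k : ℝ)]
    _ ≤ ((k : ℝ) + 1) ^ (p + 1) / (p + 1) := by gcongr; linarith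

lemma sub_le_sum_Ico_add_one_rpow (hp : 0 ≤ p) {a k : ℕ} (hak : a ≤ k) :
    ((k : ℝ) ^ (p + 1) - (a : ℝ) ^ (p + 1)) / (p + 1) ≤ ∑ i ∈ Ico a k, ((i : ℝ) + 1) ^ p := by
  have hmono : MonotoneOn (fun x : ℝ => x ^ p) (Set.Icc a k) :=
    (monotoneOn_rpow_Ici_of_exponent_nonneg hp).mono fun x hx => by
      simp only [Set.mem_Ici]; exact le_trans (Nat.cast_nonneg a) hx.1
  calc ((k : ℝ) ^ (p + 1) - (a : ℝ) ^ (p + 1)) / (p + 1) = ∫ x in (a : ℝ)..k, x ^ p := by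
        rw [integral_rpow (Or.inl (by linarith))]
    _ ≤ ∑ i ∈ Ico a k, ((i + 1 : ℕ) : ℝ) ^ p := hmono.integral_le_sum_Ico hak
    _ = ∑ i ∈ Ico a k, ((i : ℝ) + 1) ^ p := by push_cast; rfl

end SumRpow

lemma eventually_le_mul_of_le_mul_add {ι : Type*} {l : Filter ι} {Y Z : ι → ℝ} {a b C : ℝ}
    (hY : Tendsto Y l atTop) (hab : a < b) (h : ∀ᶠ x in l, Z x ≤ a * Y x + C) :
    ∀ᶠ x in l, Z x ≤ b * Y x := by
  filter_upwards [h, hY.eventually_ge_atTop (C / (b - a))] with x hZ hY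
  rw [div_le_iff₀ (sub_pos.2 hab)] at hY
  nlinarith

lemma tendsto_nhds_one_of_forall_one_lt {ι : Type*} {l : Filter ι} {r : ι → ℝ}
    (h : ∀ u > 1, ∀ᶠ x in l, u⁻¹ ≤ r x ∧ r x ≤ u) : Tendsto r l (nhds 1) := by
  refine tendsto_order.2 ⟨fun a ha => ?_, fun b hb => ?_⟩
  · obtain ⟨v, hav, hv1⟩ := exists_between (max_lt ha one_pos)
    have hv : 0 < v := lt_of_le_of_lt (le_max_right _ _) hav
    filter_upwards [h v⁻¹ (one_lt_inv₀ hv |>.2 hv1)] with x hx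
    rw [inv_inv] at hx
    exact lt_of_lt_of_le (lt_of_le_of_lt (le_max_left _ _) hav) hx.1
  · obtain ⟨u, h1u, hub⟩ := exists_between hb
    filter_upwards [h u h1u] with x hx
    exact lt_of_le_of_lt hx.2 hub

lemma Set.eq_Icc_one_ncard {S : Set ℕ} (hS : S.Finite) (hpos : ∀ m ∈ S, 1 ≤ m)
    (hlower : ∀ a b, 1 ≤ a → a ≤ b → b ∈ S → a ∈ S) : S = Set.Icc 1 S.ncard := by
  have hIcc (n : ℕ) : (Set.Icc 1 n).ncard = n := by
    rw [← Finset.coe_Icc, Set.ncard_coe_finset, Nat.card_Icc, Nat.add_sub_cancel]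
  ext m
  refine ⟨fun hm => ⟨hpos m hm, ?_⟩, fun ⟨h1m, hm⟩ => ?_⟩
  · simpa [hIcc] using
      Set.ncard_le_ncard (fun a (ha : a ∈ Set.Icc 1 m) => hlower a m ha.1 ha.2 hm) hS
  · by_contra hmS
    have hsub : S ⊆ Set.Icc 1 (m - 1) := fun b hb =>
      ⟨hpos b hb, by by_contra; exact hmS (hlower m b h1m (by omega) hb)⟩
    have := Set.ncard_le_ncard hsub (Set.finite_Icc _ _)
    rw [hIcc] at this
    omega

-- `IsGolomb` says nothing about `g 0`, hence the shift.
def partialSum (g : ℕ → ℕ) (n : ℕ) : ℕ := ∑ i ∈ range n, g (i + 1)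

lemma partialSum_add_sum_Ico (g : ℕ → ℕ) {a k : ℕ} (hak : a ≤ k) :
    partialSum g a + ∑ i ∈ Ico a k, g (i + 1) = partialSum g k :=
  sum_range_add_sum_Ico _ hak

section PartialSumBounds
variable {g : ℕ → ℕ} {B p : ℝ} {a k : ℕ}

lemma partialSum_le_of_le (hB : 0 ≤ B) (hp : 0 ≤ p) (hak : a ≤ k)
    (h : ∀ i ∈ Ico a k, (g (i + 1) : ℝ) ≤ B * ((i : ℝ) + 1) ^ p) :
    (partialSum g k : ℝ) ≤ partialSum g a + B * (((k : ℝ) + 1) ^ (p + 1) / (p + 1)) := by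
  rw [← partialSum_add_sum_Ico g hak, Nat.cast_add, Nat.cast_sum]
  gcongr
  calc ∑ i ∈ Ico a k, (g (i + 1) : ℝ) ≤ ∑ i ∈ Ico a k, B * ((i : ℝ) + 1) ^ p := sum_le_sum h
    _ ≤ ∑ i ∈ range k, B * ((i : ℝ) + 1) ^ p :=
        sum_le_sum_of_subset_of_nonneg
          (by rw [← Nat.Ico_zero_eq_range]; exact Ico_subset_Ico_left a.zero_le)
          fun _ _ _ => by positivity
    _ ≤ B * (((k : ℝ) + 1) ^ (p + 1) / (p + 1)) := by
        rw [← mul_sum]; exact mul_le_mul_of_nonneg_left (sum_range_add_one_rpow_le hp k) hB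

lemma le_partialSum_of_le (hB : 0 ≤ B) (hp : 0 ≤ p) (hak : a ≤ k)
    (h : ∀ i ∈ Ico a k, B * ((i : ℝ) + 1) ^ p ≤ g (i + 1)) :
    B * (((k : ℝ) ^ (p + 1) - (a : ℝ) ^ (p + 1)) / (p + 1)) ≤ partialSum g k := by
  calc B * (((k : ℝ) ^ (p + 1) - (a : ℝ) ^ (p + 1)) / (p + 1))
      ≤ ∑ i ∈ Ico a k, B * ((i : ℝ) + 1) ^ p := by
        rw [← mul_sum]; exact mul_le_mul_of_nonneg_left (sub_le_sum_Ico_add_one_rpow hp hak) hB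
    _ ≤ ∑ i ∈ Ico a k, (g (i + 1) : ℝ) := sum_le_sum h
    _ ≤ partialSum g k := by
        rw [← partialSum_add_sum_Ico g hak, Nat.cast_add, Nat.cast_sum]
        exact le_add_of_nonneg_left (Nat.cast_nonneg _)

end PartialSumBounds

namespace IsGolomb
variable {g : ℕ → ℕ} (hg : IsGolomb g)
include hg

lemma one_le {m : ℕ} (hm : 1 ≤ m) : 1 ≤ g m := hg.2.2.1 m hm

lemma mono {m n : ℕ} (hm : 1 ≤ m) (hmn : m ≤ n) : g m ≤ g n := hg.2.2.2.1 hm hmn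

lemma card_fiber {n : ℕ} (hn : 1 ≤ n) : {m | 1 ≤ m ∧ g m = n}.ncard = g n := by
  rw [← Nat.card_coe_set_eq]; exact hg.2.2.2.2 n hn

theorem setOf_le_eq_Icc (n : ℕ) : {m | 1 ≤ m ∧ g m ≤ n} = Set.Icc 1 (partialSum g n) := by
  induction n with
  | zero =>
    ext m
    simp only [Set.mem_ofPred_eq, Set.mem_Icc, partialSum, range_zero, sum_empty]
    exact ⟨fun ⟨h1, h2⟩ => absurd (hg.one_le h1) (by omega), fun ⟨_, h⟩ => by omega⟩
  | succ n ih =>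
    set A := {m | 1 ≤ m ∧ g m = n + 1}
    have hAfin : A.Finite := Set.finite_of_ncard_pos <| by
      rw [hg.card_fiber (by omega)]; exact hg.one_le (by omega)
    have hsplit : {m | 1 ≤ m ∧ g m ≤ n + 1} = Set.Icc 1 (partialSum g n) ∪ A := by
      rw [← ih]; ext m; simp only [Set.mem_union, Set.mem_ofPred_eq, A]; omega
    have hdisj : Disjoint (Set.Icc 1 (partialSum g n)) A := by
      rw [← ih, Set.disjoint_left]; rintro m ⟨_, h⟩ ⟨_, h'⟩; omega
    have hcard : {m | 1 ≤ m ∧ g m ≤ n + 1}.ncard = partialSum g (n + 1) := by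
      rw [hsplit, Set.ncard_union_eq hdisj (Set.finite_Icc _ _) hAfin, ← Finset.coe_Icc,
        Set.ncard_coe_finset, Nat.card_Icc, hg.card_fiber (by omega)]
      simp only [partialSum, sum_range_succ]
      omega
    rw [← hcard]
    refine Set.eq_Icc_one_ncard ?_ (fun m hm => hm.1)
      (fun a b ha hab hb => ⟨ha, (hg.mono ha hab).trans hb.2⟩)
    rw [hsplit]; exact (Set.finite_Icc _ _).union hAfin

theorem le_iff_le_partialSum {m n : ℕ} (hm : 1 ≤ m) : g m ≤ n ↔ m ≤ partialSum g n := by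
  have := Set.ext_iff.1 (hg.setOf_le_eq_Icc n) m
  simp only [Set.mem_ofPred_eq, Set.mem_Icc] at this
  tauto

lemma le_partialSum_self {m : ℕ} (hm : 1 ≤ m) : m ≤ partialSum g (g m) :=
  (hg.le_iff_le_partialSum hm).1 le_rfl

lemma partialSum_pred_lt {m : ℕ} (hm : 1 ≤ m) : partialSum g (g m - 1) < m := by
  have := hg.one_le hm
  by_contra! h
  have := (hg.le_iff_le_partialSum hm).2 h
  omega

lemma tendsto_atTop : Tendsto g atTop atTop := by
  refine Filter.tendsto_atTop.2 fun n => eventually_atTop.2 ⟨partialSum g n + 1, fun m hm => ?_⟩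
  by_contra! h
  have := (hg.le_iff_le_partialSum (by omega)).1 h.le
  omega

lemma add_one_le_partialSum {n : ℕ} (hn : 2 ≤ n) : n + 1 ≤ partialSum g n := by
  induction n, hn using Nat.le_induction with
  | base => simp [partialSum, sum_range_succ, hg.1, hg.2.1]
  | succ n hn ih =>
    rw [partialSum, sum_range_succ, ← partialSum]
    have := hg.one_le (m := n + 1) (by omega)
    omega

lemma lt_self {m : ℕ} (hm : 3 ≤ m) : g m < m := by
  have hsum : m - 1 + 1 ≤ partialSum g (m - 1) := hg.add_one_le_partialSum (by omega)
  have := (hg.le_iff_le_partialSum (m := m) (n := m - 1) (by omega)).2 (by omega)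
  omega

end IsGolomb

lemma inv_goldenRatio_eq : φ⁻¹ = φ - 1 := by
  rw [inv_goldenRatio, ← one_sub_goldenConj]; ring

lemma inv_goldenRatio_add_one : φ⁻¹ + 1 = φ := by rw [inv_goldenRatio_eq]; ring

lemma inv_goldenRatio_pos : 0 < φ⁻¹ := inv_pos.2 goldenRatio_pos

lemma inv_goldenRatio_le_one : φ⁻¹ ≤ 1 := inv_le_one_of_one_le₀ one_lt_goldenRatio.le

lemma rpow_goldenRatio_rpow_inv {x : ℝ} (hx : 0 ≤ x) : (x ^ φ) ^ φ⁻¹ = x :=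
  rpow_rpow_inv hx goldenRatio_ne_zero

noncomputable abbrev golombConst : ℝ := φ ^ (2 - φ)

lemma golombConst_pos : 0 < golombConst := rpow_pos_of_pos goldenRatio_pos _

/-- `golombConst` is the fixed point of `c ↦ (φ / c) ^ φ⁻¹`, which is what makes the ansatz
`g m ≈ c m ^ φ⁻¹` self-consistent. -/
lemma goldenRatio_mul_div_golombConst_rpow {x : ℝ} (hx : 0 ≤ x) :
    (φ * x / golombConst) ^ φ⁻¹ = golombConst * x ^ φ⁻¹ := by
  have hφ : φ / golombConst = φ ^ φ⁻¹ := by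
    rw [golombConst, div_eq_iff (rpow_pos_of_pos goldenRatio_pos _).ne', ← rpow_add goldenRatio_pos,
      inv_goldenRatio_eq]
    norm_num
  have hsq : φ⁻¹ * φ⁻¹ = 2 - φ := by
    rw [inv_goldenRatio_eq]; nlinarith [goldenRatio_sq]
  rw [mul_div_right_comm, hφ, mul_rpow (rpow_nonneg goldenRatio_pos.le _) hx,
    ← rpow_mul goldenRatio_pos.le, hsq, golombConst]

lemma one_le_golombConst : 1 ≤ golombConst :=
  one_le_rpow one_lt_goldenRatio.le (by linarith [goldenRatio_lt_two])

lemma golombConst_le_two : golombConst ≤ 2 := by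
  calc golombConst ≤ φ ^ (1 : ℝ) :=
        rpow_le_rpow_of_exponent_le one_lt_goldenRatio.le (by linarith [one_lt_goldenRatio])
    _ ≤ 2 := by rw [rpow_one]; exact goldenRatio_lt_two.le

lemma eight_rpow_inv_goldenRatio_le : (8 : ℝ) ^ φ⁻¹ ≤ 4 := by
  have hα : φ⁻¹ ≤ 2 / 3 := by
    rw [inv_le_comm₀ goldenRatio_pos (by norm_num), goldenRatio]
    have := Real.sqrt_le_sqrt (show (4 : ℝ) ≤ 5 by norm_num)
    rw [show (4 : ℝ) = 2 ^ 2 by norm_num, Real.sqrt_sq (by norm_num)] at this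
    norm_num
    linarith
  calc (8 : ℝ) ^ φ⁻¹ ≤ (8 : ℝ) ^ (2 / 3 : ℝ) := rpow_le_rpow_of_exponent_le (by norm_num) hα
    _ = 4 := by
        rw [show (8 : ℝ) = 2 ^ (3 : ℝ) by norm_num, ← rpow_mul (by norm_num)]
        norm_num

lemma one_le_golombConst_mul_rpow {m : ℕ} (hm : 1 ≤ m) : 1 ≤ golombConst * (m : ℝ) ^ φ⁻¹ :=
  one_le_mul_of_one_le_of_one_le one_le_golombConst
    (one_le_rpow (by exact_mod_cast hm) inv_goldenRatio_pos.le)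

lemma tendsto_golombConst_mul_rpow_atTop :
    Tendsto (fun m : ℕ => golombConst * (m : ℝ) ^ φ⁻¹) atTop atTop :=
  ((tendsto_rpow_atTop inv_goldenRatio_pos).comp tendsto_natCast_atTop_atTop).const_mul_atTop
    golombConst_pos

namespace IsGolomb
variable {g : ℕ → ℕ} (hg : IsGolomb g)
include hg

lemma golombConst_mul_div_rpow_le {t : ℝ} (ht : 0 < t) {a m : ℕ} (hm : 1 ≤ m) (ha : a ≤ g m)
    (hub : ∀ i ∈ Ico a (g m), (g (i + 1) : ℝ) ≤ t * golombConst * ((i : ℝ) + 1) ^ φ⁻¹) :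
    golombConst * ((m : ℝ) / t) ^ φ⁻¹ ≤
      g m + 1 + golombConst * ((partialSum g a : ℝ) / t) ^ φ⁻¹ := by
  have htc : 0 < t * golombConst := mul_pos ht golombConst_pos
  have hsum := partialSum_le_of_le htc.le inv_goldenRatio_pos.le ha hub
  rw [inv_goldenRatio_add_one] at hsum
  have hm' : (m : ℝ) ≤ partialSum g (g m) := by exact_mod_cast hg.le_partialSum_self hm
  have hscaled : φ * (m / t) / golombConst ≤
      φ * (partialSum g a / t) / golombConst + ((g m : ℝ) + 1) ^ φ := by
    have hsub : φ * (m / t) / golombConst - φ * (partialSum g a / t) / golombConst =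
        φ * ((m : ℝ) - partialSum g a) / (t * golombConst) := by
      field_simp
    rw [← sub_le_iff_le_add', hsub, div_le_iff₀ htc]
    calc φ * ((m : ℝ) - partialSum g a)
        ≤ φ * (t * golombConst * (((g m : ℝ) + 1) ^ φ / φ)) := by gcongr; linarith
      _ = ((g m : ℝ) + 1) ^ φ * (t * golombConst) := by field_simp
  calc golombConst * ((m : ℝ) / t) ^ φ⁻¹ = (φ * (m / t) / golombConst) ^ φ⁻¹ :=
        (goldenRatio_mul_div_golombConst_rpow (by positivity)).symm
    _ ≤ (φ * (partialSum g a / t) / golombConst + ((g m : ℝ) + 1) ^ φ) ^ φ⁻¹ :=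
        rpow_le_rpow (by positivity) hscaled inv_goldenRatio_pos.le
    _ ≤ (φ * (partialSum g a / t) / golombConst) ^ φ⁻¹ + (((g m : ℝ) + 1) ^ φ) ^ φ⁻¹ :=
        rpow_add_le_add_rpow (by positivity) (by positivity) inv_goldenRatio_pos.le
          inv_goldenRatio_le_one
    _ = g m + 1 + golombConst * ((partialSum g a : ℝ) / t) ^ φ⁻¹ := by
        rw [goldenRatio_mul_div_golombConst_rpow (by positivity),
          rpow_goldenRatio_rpow_inv (by positivity)]
        ring

lemma le_golombConst_mul_rpow {t : ℝ} (ht : 0 < t) {a m : ℕ} (hm : 1 ≤ m) (ha : a < g m)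
    (hlb : ∀ i ∈ Ico a (g m - 1), golombConst * ((i : ℝ) + 1) ^ φ⁻¹ ≤ t * g (i + 1)) :
    (g m : ℝ) ≤ golombConst * (t * m) ^ φ⁻¹ + a + 1 := by
  have hB : 0 < golombConst / t := div_pos golombConst_pos ht
  have hsum := le_partialSum_of_le hB.le inv_goldenRatio_pos.le (Nat.le_sub_one_of_lt ha)
    fun i hi => by rw [div_mul_eq_mul_div, div_le_iff₀ ht, mul_comm _ t]; exact hlb i hi
  rw [inv_goldenRatio_add_one] at hsum
  have hlt : (partialSum g (g m - 1) : ℝ) ≤ m := by exact_mod_cast (hg.partialSum_pred_lt hm).le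
  set k : ℕ := g m - 1 with hk
  have hgk : (g m : ℝ) = k + 1 := by rw [hk, Nat.cast_sub (by omega)]; push_cast; ring
  have hscaled : (k : ℝ) ^ φ ≤ φ * (t * m) / golombConst + (a : ℝ) ^ φ := by
    rw [← sub_le_iff_le_add, le_div_iff₀ golombConst_pos]
    have := hsum.trans hlt
    rw [div_mul_div_comm, div_le_iff₀ (by positivity)] at this
    nlinarith [goldenRatio_pos]
  have hk' : (k : ℝ) ≤ golombConst * (t * m) ^ φ⁻¹ + a := by
    calc (k : ℝ) = ((k : ℝ) ^ φ) ^ φ⁻¹ := (rpow_goldenRatio_rpow_inv (by positivity)).symm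
      _ ≤ (φ * (t * m) / golombConst + (a : ℝ) ^ φ) ^ φ⁻¹ :=
          rpow_le_rpow (by positivity) hscaled inv_goldenRatio_pos.le
      _ ≤ (φ * (t * m) / golombConst) ^ φ⁻¹ + ((a : ℝ) ^ φ) ^ φ⁻¹ :=
          rpow_add_le_add_rpow (by positivity) (by positivity) inv_goldenRatio_pos.le
            inv_goldenRatio_le_one
      _ = golombConst * (t * m) ^ φ⁻¹ + a := by
          rw [goldenRatio_mul_div_golombConst_rpow (by positivity),
            rpow_goldenRatio_rpow_inv (by positivity)]
  linarith

end IsGolomb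

def EventuallyWithinFactor (g : ℕ → ℕ) (t : ℝ) : Prop :=
  ∀ᶠ m : ℕ in atTop, golombConst * (m : ℝ) ^ φ⁻¹ ≤ t * g m ∧
    (g m : ℝ) ≤ t * golombConst * (m : ℝ) ^ φ⁻¹

namespace EventuallyWithinFactor
variable {g : ℕ → ℕ} {t u : ℝ}

lemma pos (h : EventuallyWithinFactor g t) : 0 < t := by
  obtain ⟨m, ⟨hlo, -⟩, hm⟩ := (h.and (eventually_ge_atTop 1)).exists
  have := one_le_golombConst_mul_rpow hm
  by_contra! ht
  nlinarith [mul_nonpos_of_nonpos_of_nonneg ht (Nat.cast_nonneg (α := ℝ) (g m))]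

lemma mono (h : EventuallyWithinFactor g t) (htu : t ≤ u) : EventuallyWithinFactor g u := by
  filter_upwards [h, eventually_ge_atTop 1] with m ⟨hlo, hhi⟩ hm
  have := one_le_golombConst_mul_rpow hm
  constructor <;> nlinarith [Nat.cast_nonneg (α := ℝ) (g m)]

end EventuallyWithinFactor

namespace IsGolomb
variable {g : ℕ → ℕ} (hg : IsGolomb g)
include hg

lemma eq_self_of_le_two {m : ℕ} (hm : 1 ≤ m) (hm2 : m ≤ 2) : g m = m := by
  interval_cases m
  exacts [hg.1, hg.2.1]

theorem withinFactor_eight {m : ℕ} (hm : 1 ≤ m) :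
    golombConst * (m : ℝ) ^ φ⁻¹ ≤ 8 * g m ∧ (g m : ℝ) ≤ 8 * golombConst * (m : ℝ) ^ φ⁻¹ := by
  induction m using Nat.strong_induction_on with
  | _ m ih =>
    have hX := one_le_golombConst_mul_rpow hm
    rcases Nat.lt_or_ge m 3 with hm3 | hm3
    · have hm1 : (1 : ℝ) ≤ m := by exact_mod_cast hm
      have hm2 : (m : ℝ) ≤ 2 := by exact_mod_cast (by omega : m ≤ 2)
      have hrpow : (m : ℝ) ^ φ⁻¹ ≤ m := rpow_le_self_of_one_le hm1 inv_goldenRatio_le_one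
      rw [hg.eq_self_of_le_two hm (by omega)]
      constructor <;> nlinarith [golombConst_le_two, golombConst_pos]
    have hk := hg.lt_self hm3
    have hk1 := hg.one_le hm
    have hg1 : (1 : ℝ) ≤ g m := by exact_mod_cast hk1
    have h8 := eight_rpow_inv_goldenRatio_le
    constructor
    · have hlo := hg.golombConst_mul_div_rpow_le (t := 8) (by norm_num) hm (Nat.zero_le _)
        fun i hi => by exact_mod_cast (ih (i + 1) (by have := mem_Ico.1 hi; omega) (by omega)).2
      rw [div_rpow (by positivity) (by norm_num), partialSum, sum_range_zero, Nat.cast_zero,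
        zero_div, zero_rpow inv_goldenRatio_pos.ne', mul_zero, add_zero] at hlo
      calc golombConst * (m : ℝ) ^ φ⁻¹
          = (8 : ℝ) ^ φ⁻¹ * (golombConst * ((m : ℝ) ^ φ⁻¹ / 8 ^ φ⁻¹)) := by field_simp
        _ ≤ 4 * (g m + 1) := by gcongr
        _ ≤ 8 * g m := by linarith
    · have hhi := hg.le_golombConst_mul_rpow (t := 8) (a := 0) (by norm_num) hm (by omega)
        fun i hi => by exact_mod_cast (ih (i + 1) (by have := mem_Ico.1 hi; omega) (by omega)).1
      rw [mul_rpow (by norm_num) (by positivity)] at hhi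
      push_cast at hhi
      nlinarith [golombConst_pos]

lemma eventuallyWithinFactor_eight : EventuallyWithinFactor g 8 :=
  eventually_atTop.2 ⟨1, fun _ hm => hg.withinFactor_eight hm⟩

theorem eventuallyWithinFactor_of_rpow_lt {t u : ℝ} (h : EventuallyWithinFactor g t)
    (hu : t ^ φ⁻¹ < u) : EventuallyWithinFactor g u := by
  have ht := h.pos
  have htα : 0 < t ^ φ⁻¹ := rpow_pos_of_pos ht _
  obtain ⟨a, ha⟩ := eventually_atTop.1 h
  have hlarge : ∀ᶠ m : ℕ in atTop, 1 ≤ m ∧ a < g m :=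
    (eventually_ge_atTop 1).and (hg.tendsto_atTop.eventually_gt_atTop a)
  have hlo : ∀ᶠ m : ℕ in atTop, golombConst * (m : ℝ) ^ φ⁻¹ ≤
      t ^ φ⁻¹ * g m + t ^ φ⁻¹ * (1 + golombConst * ((partialSum g a : ℝ) / t) ^ φ⁻¹) := by
    filter_upwards [hlarge] with m ⟨hm, ham⟩
    have := hg.golombConst_mul_div_rpow_le ht hm ham.le fun i hi => by
      have := (ha (i + 1) (by have := mem_Ico.1 hi; omega)).2; push_cast at this; exact this
    rw [div_rpow (by positivity) ht.le, mul_div_assoc', div_le_iff₀ htα] at this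
    linarith
  have hhi : ∀ᶠ m : ℕ in atTop,
      (g m : ℝ) ≤ t ^ φ⁻¹ * (golombConst * (m : ℝ) ^ φ⁻¹) + (a + 1) := by
    filter_upwards [hlarge] with m ⟨hm, ham⟩
    have := hg.le_golombConst_mul_rpow ht hm ham fun i hi => by
      have := (ha (i + 1) (by have := mem_Ico.1 hi; omega)).1; push_cast at this; exact this
    rw [mul_rpow ht.le (by positivity)] at this
    linarith
  filter_upwards [eventually_le_mul_of_le_mul_add
      (tendsto_natCast_atTop_atTop.comp hg.tendsto_atTop) hu hlo,
    eventually_le_mul_of_le_mul_add tendsto_golombConst_mul_rpow_atTop hu hhi] with m hlo hhi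
  exact ⟨hlo, by rw [mul_assoc]; exact hhi⟩

/-- The infimum `t₀` of the admissible factors satisfies `t₀ ^ φ ≤ t₀`, which forces `t₀ ≤ 1`. -/
theorem eventuallyWithinFactor_of_one_lt {u : ℝ} (hu : 1 < u) : EventuallyWithinFactor g u := by
  set T := {t | EventuallyWithinFactor g t}
  have hne : T.Nonempty := ⟨8, hg.eventuallyWithinFactor_eight⟩
  have hbdd : BddBelow T := ⟨0, fun t ht => ht.pos.le⟩
  have hinf_nonneg : 0 ≤ sInf T := le_csInf hne fun t ht => ht.pos.le
  have hlower : ∀ t ∈ T, sInf T ^ φ ≤ t := fun t ht => by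
    have : sInf T ≤ t ^ φ⁻¹ := le_of_forall_gt_imp_ge_of_dense fun v hv =>
      csInf_le hbdd (hg.eventuallyWithinFactor_of_rpow_lt ht hv)
    calc sInf T ^ φ ≤ (t ^ φ⁻¹) ^ φ := rpow_le_rpow hinf_nonneg this goldenRatio_pos.le
      _ = t := rpow_inv_rpow ht.pos.le goldenRatio_ne_zero
  have hinf_le_one : sInf T ≤ 1 := by
    by_contra! h1
    have := rpow_lt_rpow_of_exponent_lt h1 one_lt_goldenRatio
    rw [rpow_one] at this
    exact (le_csInf hne hlower).not_gt this
  obtain ⟨t, ht, htu⟩ := exists_lt_of_csInf_lt hne (hinf_le_one.trans_lt hu)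
  exact EventuallyWithinFactor.mono ht htu.le

end IsGolomb

theorem golomb_asymptotics (g : ℕ → ℕ) (hg : IsGolomb g) :
    Filter.Tendsto
      (fun n : ℕ =>
        (g n : ℝ) / (((1 + Real.sqrt 5) / 2) ^ (2 - (1 + Real.sqrt 5) / 2) *
          (n : ℝ) ^ ((1 + Real.sqrt 5) / 2 - 1)))
      Filter.atTop (nhds 1) := by
  change Tendsto (fun n : ℕ => (g n : ℝ) / (golombConst * (n : ℝ) ^ (φ - 1))) atTop (nhds 1)
  rw [← inv_goldenRatio_eq]
  refine tendsto_nhds_one_of_forall_one_lt fun u hu => ?_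
  filter_upwards [hg.eventuallyWithinFactor_of_one_lt hu, eventually_ge_atTop 1]
    with n ⟨hlo, hhi⟩ hn
  have hX := zero_lt_one.trans_le (one_le_golombConst_mul_rpow hn)
  constructor
  · rw [le_div_iff₀ hX, inv_mul_le_iff₀ (zero_lt_one.trans hu)]; exact hlo
  · rw [div_le_iff₀ hX, ← mul_assoc]; exact hhi
end

section
/- The kissing number in dimension 2 is 6: for every finite set S of points in the Euclidean plane ℝ² such that every point of S has norm 2 and any two distinct points of S are at distance at least 2 from each other, the cardinality of S is at most 6; moreover, there exists such a set S with exactly 6 points. -/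
/-!
Two points of norm `r` at angle less than `π / 3` are less than `r` apart (law of cosines). In the
plane, identified with `ℂ`, the arguments in `(-π, π]` fall into six half-open sectors of width
`π / 3`, and two points in the same sector make an angle less than `π / 3`; so a kissing
configuration has at most one point per sector. Conversely, the vertices of a regular hexagon of
circumradius `r` are pairwise at least `r` apart: the chord of a central angle `jπ/3`, `1 ≤ j ≤ 5`,
has length `2r sin(jπ/6) ≥ r`.
-/

open InnerProductGeometry Real

theorem Int.abs_sub_lt_one_of_ceil_eq_ceil {R : Type*} [Ring R] [LinearOrder R]
    [IsStrictOrderedRing R] [FloorRing R] {a b : R} (h : ⌈a⌉ = ⌈b⌉) : |a - b| < 1 := by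
  have : ⌊-b⌋ = ⌊-a⌋ := by rw [Int.floor_neg, Int.floor_neg, h]
  simpa only [neg_sub_neg] using Int.abs_sub_lt_one_of_floor_eq_floor this

theorem Real.one_half_le_sin {t : ℝ} (h₁ : π / 6 ≤ t) (h₂ : t ≤ 5 * π / 6) : 1 / 2 ≤ sin t := by
  rw [← cos_sub_pi_div_two, ← cos_abs, ← cos_pi_div_three]
  refine cos_le_cos_of_nonneg_of_le_pi (abs_nonneg _) (by linarith [pi_pos]) ?_
  rw [abs_le]
  constructor <;> linarith

theorem norm_sub_lt_of_angle_lt_pi_div_three {V : Type*} [NormedAddCommGroup V]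
    [InnerProductSpace ℝ V] {x y : V} (hxy : ‖x‖ = ‖y‖) (h : angle x y < π / 3) :
    ‖x - y‖ < ‖x‖ := by
  have hx : x ≠ 0 := by
    rintro rfl
    rw [angle_zero_left] at h
    linarith [pi_pos]
  have hcos : 1 / 2 < cos (angle x y) := by
    rw [← cos_pi_div_three]
    exact cos_lt_cos_of_nonneg_of_le_pi (angle_nonneg x y) (by linarith [pi_pos]) h
  have hx_pos : 0 < ‖x‖ := norm_pos_iff.mpr hx
  refine lt_of_pow_lt_pow_left₀ 2 (norm_nonneg x) ?_
  rw [sq, sq, norm_sub_sq_eq_norm_sq_add_norm_sq_sub_two_mul_norm_mul_norm_mul_cos_angle, ← hxy]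
  nlinarith [mul_pos hx_pos hx_pos]

def IsKissingConfiguration {V : Type*} [SeminormedAddCommGroup V] (r : ℝ) (S : Finset V) :
    Prop :=
  (∀ x ∈ S, ‖x‖ = r) ∧ ∀ x ∈ S, ∀ y ∈ S, x ≠ y → r ≤ dist x y

theorem IsKissingConfiguration.map {V W : Type*} [SeminormedAddCommGroup V]
    [SeminormedAddCommGroup W] [Module ℝ V] [Module ℝ W] {r : ℝ} {S : Finset V}
    (hS : IsKissingConfiguration r S) (e : V ≃ₗᵢ[ℝ] W) :
    IsKissingConfiguration r (S.map e.toEquiv.toEmbedding) := by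
  refine ⟨fun x hx => ?_, fun x hx y hy hxy => ?_⟩
  · obtain ⟨a, ha, rfl⟩ := Finset.mem_map.mp hx
    simpa using hS.1 a ha
  · obtain ⟨a, ha, rfl⟩ := Finset.mem_map.mp hx
    obtain ⟨b, hb, rfl⟩ := Finset.mem_map.mp hy
    have hab : a ≠ b := fun h => hxy (h ▸ rfl)
    simpa using hS.2 a ha b hb hab

namespace Complex

theorem angle_eq_abs_arg_sub {x y : ℂ} (hx : x ≠ 0) (hy : y ≠ 0)
    (h : x.arg - y.arg ∈ Set.Ioc (-π) π) : angle x y = |x.arg - y.arg| := by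
  have harg : (x / y).arg = ((x.arg - y.arg : ℝ) : Real.Angle).toReal :=
    arg_coe_angle_eq_iff_eq_toReal.mp (by rw [arg_div_coe_angle hx hy, Real.Angle.coe_sub])
  rw [angle_eq_abs_arg hx hy, harg, Real.Angle.toReal_coe_eq_self_iff_mem_Ioc.mpr h]

theorem norm_exp_mul_I_sub_exp_mul_I (a b : ℝ) :
    ‖exp (a * I) - exp (b * I)‖ = 2 * |Real.sin ((a - b) / 2)| := by
  have : exp (a * I) - exp (b * I) = exp (b * I) * (exp (I * ↑(a - b)) - 1) := by
    rw [mul_sub, ← exp_add, mul_one]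
    congr 2
    push_cast
    ring
  rw [this, norm_mul, norm_exp_ofReal_mul_I, one_mul, norm_exp_I_mul_ofReal_sub_one, norm_mul,
    Real.norm_eq_abs, Real.norm_eq_abs, abs_two]

-- Ceiling rather than floor: with `arg z ∈ (-π, π]`, the floor would give `arg z = π` a seventh
-- sector of its own.
theorem ceil_arg_div_pi_div_three_mem (z : ℂ) : ⌈z.arg / (π / 3)⌉ ∈ Finset.Icc (-2 : ℤ) 3 := by
  have hπ : 0 < π / 3 := by positivity
  have hlow : ((-3 : ℤ) : ℝ) < z.arg / (π / 3) := by
    rw [lt_div_iff₀ hπ]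
    linarith [neg_pi_lt_arg z]
  have hup : z.arg / (π / 3) ≤ ((3 : ℤ) : ℝ) := by
    rw [div_le_iff₀ hπ]
    linarith [arg_le_pi z]
  have := Int.lt_ceil.mpr hlow
  exact Finset.mem_Icc.mpr ⟨by omega, Int.ceil_le.mpr hup⟩

theorem norm_sub_lt_of_ceil_arg_eq {x y : ℂ} (hx : x ≠ 0) (hxy : ‖x‖ = ‖y‖)
    (h : ⌈x.arg / (π / 3)⌉ = ⌈y.arg / (π / 3)⌉) : ‖x - y‖ < ‖x‖ := by
  have hy : y ≠ 0 := norm_ne_zero_iff.mp (hxy ▸ norm_ne_zero_iff.mpr hx)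
  have harg : |x.arg - y.arg| < π / 3 := by
    have hπ : 0 < π / 3 := by positivity
    have := Int.abs_sub_lt_one_of_ceil_eq_ceil h
    rwa [← sub_div, abs_div, abs_of_pos hπ, div_lt_one hπ] at this
  refine norm_sub_lt_of_angle_lt_pi_div_three hxy ?_
  rw [angle_eq_abs_arg_sub hx hy]
  · exact harg
  · rw [abs_lt] at harg
    constructor <;> linarith [pi_pos]

theorem card_le_six_of_isKissingConfiguration {r : ℝ} {S : Finset ℂ}
    (hS : IsKissingConfiguration r S) : S.card ≤ 6 := by
  classical
  calc S.card ≤ (Finset.Icc (-2 : ℤ) 3).card := by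
        refine Finset.card_le_card_of_injOn (fun z => ⌈z.arg / (π / 3)⌉)
          (fun z _ => ceil_arg_div_pi_div_three_mem z) fun x hx y hy hceil => ?_
        by_contra hxy
        have hx0 : x ≠ 0 := by
          rintro rfl
          exact hxy (norm_eq_zero.mp (by rw [hS.1 y hy, ← hS.1 0 hx, norm_zero])).symm
        have hclose := norm_sub_lt_of_ceil_arg_eq hx0 (by rw [hS.1 x hx, hS.1 y hy]) hceil
        have hfar := hS.2 x hx y hy hxy
        rw [dist_eq_norm, ← hS.1 x hx] at hfar
        exact hfar.not_gt hclose
    _ = 6 := by simp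

noncomputable def hexagonVertex (r : ℝ) (k : ℕ) : ℂ := r * exp (↑(k * (π / 3)) * I)

theorem norm_hexagonVertex {r : ℝ} (hr : 0 ≤ r) (k : ℕ) : ‖hexagonVertex r k‖ = r := by
  rw [hexagonVertex, norm_mul, norm_exp_ofReal_mul_I, mul_one, norm_real, Real.norm_of_nonneg hr]

theorem le_dist_hexagonVertex {r : ℝ} (hr : 0 ≤ r) {k l : ℕ} (hkl : k < l) (hl : l < 6) :
    r ≤ dist (hexagonVertex r k) (hexagonVertex r l) := by
  have hk₁ : (k : ℝ) + 1 ≤ l := by exact_mod_cast hkl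
  have hk₅ : (l : ℝ) ≤ k + 5 := by exact_mod_cast (by omega : l ≤ k + 5)
  have hsin : 1 / 2 ≤ Real.sin ((l - k) * (π / 6)) :=
    Real.one_half_le_sin (by nlinarith [pi_pos]) (by nlinarith [pi_pos])
  have hchord : |Real.sin ((k * (π / 3) - l * (π / 3)) / 2)| = Real.sin ((l - k) * (π / 6)) := by
    rw [show (k * (π / 3) - l * (π / 3)) / 2 = -((l - k) * (π / 6)) by ring, Real.sin_neg,
      abs_neg, abs_of_pos (by linarith)]
  rw [dist_eq_norm, hexagonVertex, hexagonVertex, ← mul_sub, norm_mul, norm_real,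
    Real.norm_of_nonneg hr, norm_exp_mul_I_sub_exp_mul_I, hchord]
  nlinarith

theorem exists_isKissingConfiguration_card_eq_six {r : ℝ} (hr : 0 < r) :
    ∃ S : Finset ℂ, IsKissingConfiguration r S ∧ S.card = 6 := by
  classical
  have hfar : ∀ k ∈ Finset.range 6, ∀ l ∈ Finset.range 6, k ≠ l →
      r ≤ dist (hexagonVertex r k) (hexagonVertex r l) := by
    intro k hk l hl hkl
    rcases hkl.lt_or_gt with hlt | hgt
    · exact le_dist_hexagonVertex hr.le hlt (Finset.mem_range.mp hl)
    · rw [dist_comm]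
      exact le_dist_hexagonVertex hr.le hgt (Finset.mem_range.mp hk)
  have hinj : Set.InjOn (hexagonVertex r) (Finset.range 6) := fun k hk l hl h => by
    by_contra hkl
    have := hfar k hk l hl hkl
    rw [h, dist_self] at this
    exact hr.not_ge this
  refine ⟨(Finset.range 6).image (hexagonVertex r), ⟨fun x hx => ?_, fun x hx y hy hxy => ?_⟩, ?_⟩
  · obtain ⟨k, -, rfl⟩ := Finset.mem_image.mp hx
    exact norm_hexagonVertex hr.le k
  · obtain ⟨k, hk, rfl⟩ := Finset.mem_image.mp hx
    obtain ⟨l, hl, rfl⟩ := Finset.mem_image.mp hy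
    exact hfar k hk l hl fun h => hxy (h ▸ rfl)
  · rw [Finset.card_image_of_injOn hinj, Finset.card_range]

end Complex

theorem kissingNumber_dim2 :
    (∀ S : Finset (EuclideanSpace ℝ (Fin 2)),
        (∀ x ∈ S, ‖x‖ = 2) →
        (∀ x ∈ S, ∀ y ∈ S, x ≠ y → 2 ≤ dist x y) →
        S.card ≤ 6) ∧
      ∃ S : Finset (EuclideanSpace ℝ (Fin 2)),
        (∀ x ∈ S, ‖x‖ = 2) ∧
        (∀ x ∈ S, ∀ y ∈ S, x ≠ y → 2 ≤ dist x y) ∧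
        S.card = 6 := by
  let e : ℂ ≃ₗᵢ[ℝ] EuclideanSpace ℝ (Fin 2) := Complex.orthonormalBasisOneI.repr
  refine ⟨fun S hnorm hdist => ?_, ?_⟩
  · rw [← Finset.card_map e.symm.toEquiv.toEmbedding]
    exact Complex.card_le_six_of_isKissingConfiguration ((show IsKissingConfiguration 2 S from
      ⟨hnorm, hdist⟩).map e.symm)
  · obtain ⟨S, hS, hcard⟩ := Complex.exists_isKissingConfiguration_card_eq_six two_pos
    exact ⟨_, (hS.map e).1, (hS.map e).2, by rw [Finset.card_map, hcard]⟩
end
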